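/- arXiv:2410.02034 — 6 statements merged into one kernel-verified Lean document; each statement's English description precedes it below -/
import Mathlib

section
/- Let A be a primitive J(α,β)-axial algebra generated by two primitive J(α,β)-axes a and b. Then A is spanned as an F-vector space by a, b and ab (equivalently by a, b and τ_a(b)). Moreover, writing b = x·a + b_α + b_β with x ∈ F, b_α ∈ A_α(a), b_β ∈ A_β(a), one has A_α(a) = F·((β−1)x·a − β·b + ab) and A_β(a) = F·((α−1)x·a − α·b + ab). -/
variable (F : Type*) [Field F] (A : Type*) [NonUnitalNonAssocCommRing A]
  [Module F A] [SMulCommClass F A A] [IsScalarTower F A A]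

/-- The `l`-eigenspace of the left multiplication operator `ad_a`. -/
def eigSp (a : A) (l : F) : Submodule F A where
  carrier := {x | a * x = l • x}
  add_mem' := by
    intro x y hx hy
    simp only [Set.mem_setOf_eq] at *
    rw [mul_add, hx, hy, smul_add]
  zero_mem' := by simp
  smul_mem' := by
    intro c x hx
    simp only [Set.mem_setOf_eq] at *
    rw [mul_smul_comm, hx, smul_comm]

/-- `a` is a `J(α,β)`-axis: an idempotent whose adjoint is semisimple with
eigenvalues among `1, α, β`, satisfying the fusion law `J(α,β)`. -/
structure IsJAxis (α β : F) (a : A) : Prop where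
  idem : a * a = a
  decomp : eigSp F A a 1 ⊔ eigSp F A a α ⊔ eigSp F A a β = ⊤
  f11 : ∀ x ∈ eigSp F A a 1, ∀ y ∈ eigSp F A a 1, x * y ∈ eigSp F A a 1
  f1a : ∀ x ∈ eigSp F A a 1, ∀ y ∈ eigSp F A a α, x * y ∈ eigSp F A a α
  f1b : ∀ x ∈ eigSp F A a 1, ∀ y ∈ eigSp F A a β, x * y ∈ eigSp F A a β
  faa : ∀ x ∈ eigSp F A a α, ∀ y ∈ eigSp F A a α, x * y ∈ eigSp F A a 1 ⊔ eigSp F A a α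
  fab : ∀ x ∈ eigSp F A a α, ∀ y ∈ eigSp F A a β, x * y ∈ eigSp F A a β
  fbb : ∀ x ∈ eigSp F A a β, ∀ y ∈ eigSp F A a β, x * y ∈ eigSp F A a 1 ⊔ eigSp F A a α

/-- A primitive `J(α,β)`-axis: `A_1(a) = F·a`. -/
def IsPrimJAxis (α β : F) (a : A) : Prop :=
  IsJAxis F A α β a ∧ eigSp F A a 1 = Submodule.span F {a}

/-- `A` is a primitive `J(α,β)`-axial algebra: generated as an `F`-algebra by a
set of primitive `J(α,β)`-axes. -/
def IsJAxialAlg (α β : F) : Prop :=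
  ∃ S : Set A, (∀ a ∈ S, IsPrimJAxis F A α β a) ∧ NonUnitalAlgebra.adjoin F S = ⊤

/-- The `(⋆)` condition: for any two primitive axes `a, b`, writing
`b = x • a + bα + bβ`, the projection of `a` onto `A_1(b)` equals `x • b`. -/
def StarCond (α β : F) : Prop :=
  ∀ a b : A, IsPrimJAxis F A α β a → IsPrimJAxis F A α β b →
    ∀ x : F, ∀ bα ∈ eigSp F A a α, ∀ bβ ∈ eigSp F A a β, b = x • a + bα + bβ →
      ∃ aα ∈ eigSp F A b α, ∃ aβ ∈ eigSp F A b β, a = x • b + aα + aβ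

/-- A Frobenius form: a nonzero symmetric bilinear form that associates with
the product. -/
def IsFrobenius (B : A →ₗ[F] A →ₗ[F] F) : Prop :=
  B ≠ 0 ∧ (∀ u v, B u v = B v u) ∧ ∀ u v w, B u (v * w) = B (u * v) w


set_option linter.unusedSectionVars false
set_option maxHeartbeats 1000000

lemma mem_eigSp {a x : A} {l : F} : x ∈ eigSp F A a l ↔ a * x = l • x := Iff.rfl

lemma smul_cancel {c : F} (hc : c ≠ 0) {w : A} (h : c • w = 0) : w = 0 := by
  rw [← inv_smul_smul₀ hc w, h, smul_zero]

lemma indep {α β : F} (hα1 : α ≠ 1) (hβ1 : β ≠ 1) (hαβ : α ≠ β) {a : A}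
    {u v w : A} (hu : u ∈ eigSp F A a 1) (hv : v ∈ eigSp F A a α)
    (hw : w ∈ eigSp F A a β) (h : u + v + w = 0) : u = 0 ∧ v = 0 ∧ w = 0 := by
  rw [mem_eigSp] at hu hv hw
  have h1 : u + α • v + β • w = 0 := by
    have e := congrArg (a * ·) h
    simpa [mul_add, hu, hv, hw] using e
  have h2 : (α - 1) • v + (β - 1) • w = 0 := by
    linear_combination (norm := module) h1 - h
  have h3 : ((α - 1) * α) • v + ((β - 1) * β) • w = 0 := by
    have e := congrArg (a * ·) h2
    simpa [mul_add, mul_smul_comm, hv, hw, smul_smul, mul_comm] using e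
  have h5 : ((α - β) * (β - 1)) • w = 0 := by
    linear_combination (norm := module) α • h2 - h3
  have hw0 : w = 0 :=
    smul_cancel F A (mul_ne_zero (sub_ne_zero.mpr hαβ) (sub_ne_zero.mpr hβ1)) h5
  have hv0 : v = 0 := by
    have h6 : (α - 1) • v = 0 := by simpa [hw0] using h2
    exact smul_cancel F A (sub_ne_zero.mpr hα1) h6
  have hu0 : u = 0 := by simpa [hv0, hw0] using h
  exact ⟨hu0, hv0, hw0⟩

lemma decompose {α β : F} {a : A} (ha : IsJAxis F A α β a) (z : A) :
    ∃ u ∈ eigSp F A a 1, ∃ v ∈ eigSp F A a α, ∃ w ∈ eigSp F A a β, z = u + v + w := by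
  have hz : z ∈ eigSp F A a 1 ⊔ eigSp F A a α ⊔ eigSp F A a β := ha.decomp ▸ trivial
  obtain ⟨y, hy, w, hw, h1⟩ := Submodule.mem_sup.mp hz
  obtain ⟨u, hu, v, hv, h2⟩ := Submodule.mem_sup.mp hy
  exact ⟨u, hu, v, hv, w, hw, by rw [← h1, ← h2]⟩

/-- `τ` is the Miyamoto involution associated to the axis `a`: it fixes
`A_1(a) ⊕ A_α(a)` pointwise and negates `A_β(a)`. -/
def IsMiyamoto (α β : F) (a : A) (τ : A →ₗ[F] A) : Prop :=
  (∀ x ∈ eigSp F A a 1 ⊔ eigSp F A a α, τ x = x) ∧ ∀ x ∈ eigSp F A a β, τ x = -x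

theorem two_generated_span (α β : F) (h2 : (2 : F) ≠ 0)
    (hα1 : α ≠ 1) (hβ1 : β ≠ 1) (hαβ : α ≠ β)
    (a b : A) (ha : IsPrimJAxis F A α β a) (hb : IsPrimJAxis F A α β b)
    (hgen : NonUnitalAlgebra.adjoin F {a, b} = ⊤)
    (x : F) (bα bβ : A) (hbα : bα ∈ eigSp F A a α) (hbβ : bβ ∈ eigSp F A a β)
    (hdec : b = x • a + bα + bβ) :
    Submodule.span F {a, b, a * b} = ⊤ ∧
    (∀ τ : A →ₗ[F] A, IsMiyamoto F A α β a τ → Submodule.span F {a, b, τ b} = ⊤) ∧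
    eigSp F A a α = Submodule.span F {((β - 1) * x) • a - β • b + a * b} ∧
    eigSp F A a β = Submodule.span F {((α - 1) * x) • a - α • b + a * b} := by
  have hαβ' : α - β ≠ 0 := sub_ne_zero.mpr hαβ
  have hβα' : β - α ≠ 0 := sub_ne_zero.mpr (Ne.symm hαβ)
  have haa : a * a = a := ha.1.idem
  have ha1 : a ∈ eigSp F A a 1 := by rw [mem_eigSp, one_smul]; exact haa
  have hgα : a * bα = α • bα := hbα
  have hgβ : a * bβ = β • bβ := hbβ
  have hab : a * b = x • a + α • bα + β • bβ := by
    rw [hdec, mul_add, mul_add, mul_smul_comm, haa, hgα, hgβ]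
  -- expand b * b = b
  have hbb := hb.1.idem
  rw [hdec] at hbb
  simp only [mul_add, add_mul, smul_mul_assoc, mul_smul_comm, smul_smul] at hbb
  rw [mul_comm bα a, mul_comm bβ a, mul_comm bβ bα, haa, hgα, hgβ] at hbb
  simp only [smul_smul] at hbb
  -- split into components
  obtain ⟨s1, hs1, sα, hsα, hs⟩ := Submodule.mem_sup.mp
    (Submodule.add_mem _ (ha.1.faa bα hbα bα hbα) (ha.1.fbb bβ hbβ bβ hbβ) :
      bα * bα + bβ * bβ ∈ eigSp F A a 1 ⊔ eigSp F A a α)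
  have htmem : bα * bβ ∈ eigSp F A a β := ha.1.fab bα hbα bβ hbβ
  have h0 : (s1 - (x - x * x) • a) + (sα - (1 - 2 * x * α) • bα)
      + ((2 : F) • (bα * bβ) - (1 - 2 * x * β) • bβ) = 0 := by
    linear_combination (norm := module) hbb + hs
  obtain ⟨hu0, hv0, hw0⟩ := indep F A hα1 hβ1 hαβ
    (Submodule.sub_mem _ hs1 (Submodule.smul_mem _ _ ha1))
    (Submodule.sub_mem _ hsα (Submodule.smul_mem _ _ hbα))
    (Submodule.sub_mem _ (Submodule.smul_mem _ _ htmem) (Submodule.smul_mem _ _ hbβ)) h0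
  have htprod : bα * bβ = (2⁻¹ * (1 - 2 * x * β)) • bβ := by
    have e : (2 : F) • (bα * bβ) = (1 - 2 * x * β) • bβ := sub_eq_zero.mp hw0
    rw [← inv_smul_smul₀ h2 (bα * bβ), e, smul_smul]
  have hssum : bα * bα + bβ * bβ = (x - x * x) • a + (1 - 2 * x * α) • bα := by
    rw [← hs, sub_eq_zero.mp hu0, sub_eq_zero.mp hv0]
  -- the span N
  set N : Submodule F A := Submodule.span F {a, bα, bβ} with hN
  have haN : a ∈ N := Submodule.subset_span (by simp)
  have hbαN : bα ∈ N := Submodule.subset_span (by simp)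
  have hbβN : bβ ∈ N := Submodule.subset_span (by simp)
  have hbN : b ∈ N := by
    rw [hdec]; exact add_mem (add_mem (Submodule.smul_mem _ _ haN) hbαN) hbβN
  have habN : a * b ∈ N := by
    rw [hab]
    exact add_mem (add_mem (Submodule.smul_mem _ _ haN) (Submodule.smul_mem _ _ hbαN))
      (Submodule.smul_mem _ _ hbβN)
  -- decompose a with respect to b
  obtain ⟨u', hu', v', hv', w', hw', hadec⟩ := decompose F A hb.1 a
  rw [hb.2] at hu'
  obtain ⟨y, rfl⟩ := Submodule.mem_span_singleton.mp hu'
  have hv'e : b * v' = α • v' := hv'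
  have hw'e : b * w' = β • w' := hw'
  have hba : a * b = y • b + α • v' + β • w' := by
    rw [mul_comm a b, hadec, mul_add, mul_add, mul_smul_comm, hb.1.idem, hv'e, hw'e]
  have hw'N : w' ∈ N := by
    have h6 : (β - α) • w' = a * b - α • a + ((α - 1) * y) • b := by
      linear_combination (norm := module) α • hadec - hba
    rw [← inv_smul_smul₀ hβα' w', h6]
    exact Submodule.smul_mem _ _ (add_mem (sub_mem habN (Submodule.smul_mem _ _ haN))
      (Submodule.smul_mem _ _ hbN))
  have hv'N : v' ∈ N := by
    have h6 : (α - β) • v' = a * b - β • a + ((β - 1) * y) • b := by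
      linear_combination (norm := module) β • hadec - hba
    rw [← inv_smul_smul₀ hαβ' v', h6]
    exact Submodule.smul_mem _ _ (add_mem (sub_mem habN (Submodule.smul_mem _ _ haN))
      (Submodule.smul_mem _ _ hbN))
  have hbabN : b * (a * b) ∈ N := by
    have e : b * (a * b) = y • b + (α * α) • v' + (β * β) • w' := by
      rw [hba, mul_add, mul_add, mul_smul_comm, mul_smul_comm, mul_smul_comm,
        hb.1.idem, hv'e, hw'e, smul_smul, smul_smul]
    rw [e]
    exact add_mem (add_mem (Submodule.smul_mem _ _ hbN) (Submodule.smul_mem _ _ hv'N))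
      (Submodule.smul_mem _ _ hw'N)
  -- a-side expansion of b * (a*b)
  have hexp : b * (a * b) = (x * x) • a + (x * α * α + x * α) • bα
      + (x * β * β + x * β + (α + β) * (2⁻¹ * (1 - 2 * x * β))) • bβ
      + α • (bα * bα) + β • (bβ * bβ) := by
    conv_lhs => rw [hab, hdec]
    simp only [mul_add, add_mul, smul_mul_assoc, mul_smul_comm, smul_smul]
    rw [mul_comm bα a, mul_comm bβ a, mul_comm bβ bα, haa, hgα, hgβ, htprod]
    simp only [smul_smul]
    module
  have hcombN : α • (bα * bα) + β • (bβ * bβ) ∈ N := by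
    have e : α • (bα * bα) + β • (bβ * bβ) = b * (a * b) - ((x * x) • a
        + (x * α * α + x * α) • bα
        + (x * β * β + x * β + (α + β) * (2⁻¹ * (1 - 2 * x * β))) • bβ) := by
      rw [hexp]; abel
    rw [e]
    exact sub_mem hbabN (add_mem (add_mem (Submodule.smul_mem _ _ haN)
      (Submodule.smul_mem _ _ hbαN)) (Submodule.smul_mem _ _ hbβN))
  have hsumN : bα * bα + bβ * bβ ∈ N := by
    rw [hssum]
    exact add_mem (Submodule.smul_mem _ _ haN) (Submodule.smul_mem _ _ hbαN)
  have hbβ2N : bβ * bβ ∈ N := by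
    have e : (β - α) • (bβ * bβ) = (α • (bα * bα) + β • (bβ * bβ))
        - α • (bα * bα + bβ * bβ) := by module
    rw [← inv_smul_smul₀ hβα' (bβ * bβ), e]
    exact Submodule.smul_mem _ _ (sub_mem hcombN (Submodule.smul_mem _ _ hsumN))
  have hbα2N : bα * bα ∈ N := by
    have e : (α - β) • (bα * bα) = (α • (bα * bα) + β • (bβ * bβ))
        - β • (bα * bα + bβ * bβ) := by module
    rw [← inv_smul_smul₀ hαβ' (bα * bα), e]
    exact Submodule.smul_mem _ _ (sub_mem hcombN (Submodule.smul_mem _ _ hsumN))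
  -- N is closed under multiplication
  have hgen3 : ∀ p ∈ ({a, bα, bβ} : Set A), ∀ q ∈ ({a, bα, bβ} : Set A), p * q ∈ N := by
    intro p hp q hq
    simp only [Set.mem_insert_iff, Set.mem_singleton_iff] at hp hq
    rcases hp with rfl | rfl | rfl <;> rcases hq with rfl | rfl | rfl
    · rw [haa]; exact haN
    · rw [hgα]; exact Submodule.smul_mem _ _ hbαN
    · rw [hgβ]; exact Submodule.smul_mem _ _ hbβN
    · rw [mul_comm, hgα]; exact Submodule.smul_mem _ _ hbαN
    · exact hbα2N
    · rw [htprod]; exact Submodule.smul_mem _ _ hbβN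
    · rw [mul_comm, hgβ]; exact Submodule.smul_mem _ _ hbβN
    · rw [mul_comm, htprod]; exact Submodule.smul_mem _ _ hbβN
    · exact hbβ2N
  have hmulN : ∀ u ∈ N, ∀ v ∈ N, u * v ∈ N := by
    have step1 : ∀ p ∈ ({a, bα, bβ} : Set A), ∀ v ∈ N, p * v ∈ N := by
      intro p hp v hv
      induction hv using Submodule.span_induction with
      | mem y hy => exact hgen3 p hp y hy
      | zero => rw [mul_zero]; exact N.zero_mem
      | add y z hy hz ihy ihz => rw [mul_add]; exact add_mem ihy ihz
      | smul c y hy ihy => rw [mul_smul_comm]; exact Submodule.smul_mem _ _ ihy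
    intro u hu v hv
    induction hu using Submodule.span_induction with
    | mem y hy => exact step1 y hy v hv
    | zero => rw [zero_mul]; exact N.zero_mem
    | add y z hy hz ihy ihz => rw [add_mul]; exact add_mem ihy ihz
    | smul c y hy ihy => rw [smul_mul_assoc]; exact Submodule.smul_mem _ _ ihy
  -- N = ⊤
  have htopN : ∀ z : A, z ∈ N := by
    let S : NonUnitalSubalgebra F A :=
      { carrier := (N : Set A)
        add_mem' := fun h h' => N.add_mem h h'
        zero_mem' := N.zero_mem
        mul_mem' := fun {p q} hp hq => hmulN p hp q hq
        smul_mem' := fun c {z} h => N.smul_mem c h }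
    have hle : NonUnitalAlgebra.adjoin F {a, b} ≤ S := by
      apply NonUnitalAlgebra.adjoin_le
      intro z hz
      rcases hz with rfl | rfl
      · exact haN
      · exact hbN
    intro z
    exact hle (by rw [hgen]; trivial)
  -- piece the goals together
  have hMN : Submodule.span F {a, b, a * b} = N := by
    apply le_antisymm
    · rw [Submodule.span_le]
      intro z hz
      rcases hz with rfl | rfl | rfl
      · exact haN
      · exact hbN
      · exact habN
    · rw [hN, Submodule.span_le]
      intro z hz
      have haM : a ∈ Submodule.span F {a, b, a * b} := Submodule.subset_span (by simp)
      have hbM : b ∈ Submodule.span F {a, b, a * b} := Submodule.subset_span (by simp)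
      have habM : a * b ∈ Submodule.span F {a, b, a * b} := Submodule.subset_span (by simp)
      have hbαM : bα ∈ Submodule.span F {a, b, a * b} := by
        have e : (α - β) • bα = a * b - x • a - β • (b - x • a) := by
          rw [hab, hdec]; module
        rw [← inv_smul_smul₀ hαβ' bα, e]
        exact Submodule.smul_mem _ _ (sub_mem (sub_mem habM (Submodule.smul_mem _ _ haM))
          (Submodule.smul_mem _ _ (sub_mem hbM (Submodule.smul_mem _ _ haM))))
      have hbβM : bβ ∈ Submodule.span F {a, b, a * b} := by
        have e : (β - α) • bβ = a * b - x • a - α • (b - x • a) := by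
          rw [hab, hdec]; module
        rw [← inv_smul_smul₀ hβα' bβ, e]
        exact Submodule.smul_mem _ _ (sub_mem (sub_mem habM (Submodule.smul_mem _ _ haM))
          (Submodule.smul_mem _ _ (sub_mem hbM (Submodule.smul_mem _ _ haM))))
      rcases hz with rfl | rfl | rfl
      · exact haM
      · exact hbαM
      · exact hbβM
  have hNtop : N = ⊤ := Submodule.eq_top_iff'.mpr htopN
  refine ⟨by rw [hMN, hNtop], ?_, ?_, ?_⟩
  · intro τ hτ
    have hτb : τ b = x • a + bα - bβ := by
      have e1 : τ (x • a + bα) = x • a + bα := hτ.1 _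
        (Submodule.add_mem _ (Submodule.mem_sup_left (Submodule.smul_mem _ _ ha1))
          (Submodule.mem_sup_right hbα))
      have e2 : τ bβ = -bβ := hτ.2 bβ hbβ
      rw [hdec, map_add, e1, e2, sub_eq_add_neg]
    rw [eq_top_iff, ← hNtop, hN, Submodule.span_le]
    intro z hz
    have haP : a ∈ Submodule.span F {a, b, τ b} := Submodule.subset_span (by simp)
    have hbP : b ∈ Submodule.span F {a, b, τ b} := Submodule.subset_span (by simp)
    have hτbP : τ b ∈ Submodule.span F {a, b, τ b} := Submodule.subset_span (by simp)
    have hbβP : bβ ∈ Submodule.span F {a, b, τ b} := by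
      have e : (2 : F) • bβ = b - τ b := by rw [hτb, hdec]; module
      rw [← inv_smul_smul₀ h2 bβ, e]
      exact Submodule.smul_mem _ _ (sub_mem hbP hτbP)
    have hbαP : bα ∈ Submodule.span F {a, b, τ b} := by
      have e : (2 : F) • bα = b + τ b - (2 * x) • a := by rw [hτb, hdec]; module
      rw [← inv_smul_smul₀ h2 bα, e]
      exact Submodule.smul_mem _ _ (sub_mem (add_mem hbP hτbP) (Submodule.smul_mem _ _ haP))
    rcases hz with rfl | rfl | rfl
    · exact haP
    · exact hbαP
    · exact hbβP
  · have hgeq : ((β - 1) * x) • a - β • b + a * b = (α - β) • bα := by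
      rw [hab, hdec]; module
    rw [hgeq]
    apply le_antisymm
    · intro v hv
      obtain ⟨c1, z1, hz1, hveq1⟩ := Submodule.mem_span_insert.mp (htopN v)
      obtain ⟨c2, z2, hz2, hveq2⟩ := Submodule.mem_span_insert.mp hz1
      obtain ⟨c3, rfl⟩ := Submodule.mem_span_singleton.mp hz2
      have hveq : v = c1 • a + c2 • bα + c3 • bβ := by
        rw [hveq1, hveq2]; module
      have h0' : c1 • a + (c2 • bα - v) + c3 • bβ = 0 := by
        linear_combination (norm := module) -hveq
      obtain ⟨_, hm, _⟩ := indep F A hα1 hβ1 hαβ (Submodule.smul_mem _ _ ha1)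
        (Submodule.sub_mem _ (Submodule.smul_mem _ _ hbα) hv)
        (Submodule.smul_mem _ _ hbβ) h0'
      have hveqα : v = c2 • bα := (sub_eq_zero.mp hm).symm
      rw [Submodule.mem_span_singleton]
      exact ⟨c2 * (α - β)⁻¹, by rw [smul_smul, mul_assoc, inv_mul_cancel₀ hαβ', mul_one, ← hveqα]⟩
    · rw [Submodule.span_le, Set.singleton_subset_iff]
      exact Submodule.smul_mem _ _ hbα
  · have hgeq : ((α - 1) * x) • a - α • b + a * b = (β - α) • bβ := by
      rw [hab, hdec]; module
    rw [hgeq]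
    apply le_antisymm
    · intro v hv
      obtain ⟨c1, z1, hz1, hveq1⟩ := Submodule.mem_span_insert.mp (htopN v)
      obtain ⟨c2, z2, hz2, hveq2⟩ := Submodule.mem_span_insert.mp hz1
      obtain ⟨c3, rfl⟩ := Submodule.mem_span_singleton.mp hz2
      have hveq : v = c1 • a + c2 • bα + c3 • bβ := by
        rw [hveq1, hveq2]; module
      have h0' : c1 • a + c2 • bα + (c3 • bβ - v) = 0 := by
        linear_combination (norm := module) -hveq
      obtain ⟨_, _, hm⟩ := indep F A hα1 hβ1 hαβ (Submodule.smul_mem _ _ ha1)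
        (Submodule.smul_mem _ _ hbα)
        (Submodule.sub_mem _ (Submodule.smul_mem _ _ hbβ) hv) h0'
      have hveqβ : v = c3 • bβ := (sub_eq_zero.mp hm).symm
      rw [Submodule.mem_span_singleton]
      exact ⟨c3 * (β - α)⁻¹, by rw [smul_smul, mul_assoc, inv_mul_cancel₀ hβα', mul_one, ← hveqβ]⟩
    · rw [Submodule.span_le, Set.singleton_subset_iff]
      exact Submodule.smul_mem _ _ hbβ
end

section
/- Let A be a primitive J(α,β)-axial algebra and let a, b ∈ A be primitive J(α,β)-axes such that the set {a, b, ab} is linearly independent. Write b = x·a + b_α + b_β with x ∈ F, b_α ∈ A_α(a), b_β ∈ A_β(a). Then β = 1/2 or x = −(α+β)/(2(α−1)). -/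
variable (F : Type*) [Field F] (A : Type*) [NonUnitalNonAssocCommRing A]
  [Module F A] [SMulCommClass F A A] [IsScalarTower F A A]

lemma mul_expand (x₁ x₂ : F) (a u₁ v₁ u₂ v₂ : A) (haa : a*a = a) :
    (x₁•a + u₁ + v₁) * (x₂•a + u₂ + v₂) =
    (x₁*x₂)•a + x₁•(a*u₂) + x₁•(a*v₂) + x₂•(a*u₁) + x₂•(a*v₁)
      + u₁*u₂ + u₁*v₂ + v₁*u₂ + v₁*v₂ := by
  simp only [add_mul, mul_add, smul_mul_assoc, mul_smul_comm, haa]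
  rw [mul_comm u₁ a, mul_comm v₁ a]
  module

lemma vander (α β : F) (hα1 : α ≠ 1) (hβ1 : β ≠ 1) (hαβ : α ≠ β)
    (c u v w : A) (hu : c*u = u) (hv : c*v = α•v) (hw : c*w = β•w)
    (h : u + v + w = 0) : w = 0 := by
  have e2 : u + α•v + β•w = 0 := by
    have h' := congrArg (c * ·) h
    simp only [mul_add, hu, hv, hw, mul_zero] at h'
    exact h'
  have e3 : u + α•(α•v) + β•(β•w) = 0 := by
    have h' := congrArg (c * ·) e2
    simp only [mul_add, mul_smul_comm, hu, hv, hw, mul_zero] at h'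
    exact h'
  have f1 : (α-1)•v + (β-1)•w = 0 := by linear_combination (norm := module) e2 - h
  have f2 : (α*(α-1))•v + (β*(β-1))•w = 0 := by linear_combination (norm := module) e3 - e2
  have f3 : ((β-α)*(β-1))•w = 0 := by linear_combination (norm := module) f2 - α • f1
  have hne : (β-α)*(β-1) ≠ 0 :=
    mul_ne_zero (sub_ne_zero.mpr (Ne.symm hαβ)) (sub_ne_zero.mpr hβ1)
  rw [← inv_smul_smul₀ hne w, f3, smul_zero]

lemma scalar_zero (s : F) (v : A) (h : s•v = 0) (hv : v ≠ 0) : s = 0 := by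
  by_contra hs
  exact hv (by rw [← inv_smul_smul₀ hs v, h, smul_zero])

lemma comp_ne_zero (α β y : F) (p q qα qβ : A) (hqq : q*q = q)
    (h3 : q*qα = α•qα) (h4 : q*qβ = β•qβ) (hdec : p = y•q + qα + qβ)
    (hns : ∀ c d : F, p*q ≠ c•p + d•q) : qβ ≠ 0 := by
  intro h0
  apply hns α (y - α*y)
  have hpq : p*q = y•q + α•qα + β•qβ := by
    rw [mul_comm p q]
    conv_lhs => rw [hdec]
    simp only [mul_add, mul_smul_comm, hqq, h3, h4]
  have hqα : qα = p - y•q - qβ := by rw [hdec]; abel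
  rw [hpq, hqα, h0]
  module

lemma key (α β x y : F) (hα1 : α ≠ 1) (hβ1 : β ≠ 1) (hαβ : α ≠ β)
    (a b bα bβ aα aβ c1 cα d1 dα : A)
    (haa : a*a = a) (hbb : b*b = b)
    (h1 : a*bα = α•bα) (h2b : a*bβ = β•bβ)
    (h3 : b*aα = α•aα) (h4 : b*aβ = β•aβ)
    (hc1 : a*c1 = c1) (hcα : a*cα = α•cα) (hd1 : a*d1 = d1) (hdα : a*dα = α•dα)
    (hf1 : bα*bα = c1 + cα) (hf2 : bβ*bβ = d1 + dα)
    (hf3 : a*(bα*bβ) = β•(bα*bβ))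
    (hbdec : b = x•a + bα + bβ) (hadec : a = y•b + aα + aβ)
    (hbβ0 : bβ ≠ 0) :
    2*(x*β*β + x*β - (α+β)*β - y*((1-α)*(1-β))) + (α+β)*(1-2*(x*β)) = 0 := by
  have hab_a : a*b = x•a + α•bα + β•bβ := by
    conv_lhs => rw [hbdec]
    simp only [mul_add, mul_smul_comm, haa, h1, h2b]
  have hab_b : a*b = y•b + α•aα + β•aβ := by
    rw [mul_comm a b]
    conv_lhs => rw [hadec]
    simp only [mul_add, mul_smul_comm, hbb, h3, h4]
  have hbab : b*(a*b) = y•b + α•(α•aα) + β•(β•aβ) := by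
    rw [hab_b]
    simp only [mul_add, mul_smul_comm, hbb, h3, h4]
  have hD : b*(a*b) = (-(α*β))•a + (α+β)•(a*b) + (y*((1-α)*(1-β)))•b := by
    rw [hbab, hab_b]
    conv_rhs => rw [hadec]
    module
  have hD' : b*(a*b) = (-(α*β))•a + (α+β)•(x•a + α•bα + β•bβ)
      + (y*((1-α)*(1-β)))•(x•a + bα + bβ) := by
    rw [hD, hab_a, hbdec]
  have hE : b*(a*b) = (x*x)•a + x•(α•(α•bα)) + x•(β•(β•bβ)) + x•(α•bα) + x•(β•bβ)
      + α•(c1 + cα) + β•(bα*bβ) + α•(bα*bβ) + β•(d1 + dα) := by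
    rw [hab_a]
    conv_lhs => rw [hbdec]
    rw [mul_expand F A x x a bα bβ (α•bα) (β•bβ) haa]
    simp only [mul_smul_comm, h1, h2b, mul_comm bβ bα, hf1, hf2]
  -- the relation 2 bα bβ = (1 - 2 x β) bβ from b*b = b
  have e0 : ((x*x - x)•a + c1 + d1) + ((x*α + x*α - 1)•bα + cα + dα)
      + ((x*β + x*β - 1)•bβ + (bα*bβ + bα*bβ)) = 0 := by
    have e : (x•a + bα + bβ)*(x•a + bα + bβ) = x•a + bα + bβ := by rw [← hbdec]; exact hbb
    rw [mul_expand F A x x a bα bβ bα bβ haa, h1, h2b, hf1, hf2, mul_comm bβ bα] at e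
    linear_combination (norm := module) e
  have hstar : (x*β + x*β - 1)•bβ + (bα*bβ + bα*bβ) = 0 := by
    refine vander F A α β hα1 hβ1 hαβ a ((x*x - x)•a + c1 + d1)
      ((x*α + x*α - 1)•bα + cα + dα) _ ?_ ?_ ?_ e0
    · simp only [mul_add, mul_smul_comm, haa, hc1, hd1]
    · simp only [mul_add, mul_smul_comm, h1, hcα, hdα]; module
    · simp only [mul_add, mul_smul_comm, h2b, hf3]; module
  -- β-component of b(ab)
  have e1 : ((x*x + α*β - (α+β)*x - y*((1-α)*(1-β))*x)•a + α•c1 + β•d1)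
      + ((x*α*α + x*α - (α+β)*α - y*((1-α)*(1-β)))•bα + α•cα + β•dα)
      + ((x*β*β + x*β - (α+β)*β - y*((1-α)*(1-β)))•bβ + (β•(bα*bβ) + α•(bα*bβ))) = 0 := by
    linear_combination (norm := module) hD' - hE
  have hw' : (x*β*β + x*β - (α+β)*β - y*((1-α)*(1-β)))•bβ + (β•(bα*bβ) + α•(bα*bβ)) = 0 := by
    refine vander F A α β hα1 hβ1 hαβ a
      ((x*x + α*β - (α+β)*x - y*((1-α)*(1-β))*x)•a + α•c1 + β•d1)
      ((x*α*α + x*α - (α+β)*α - y*((1-α)*(1-β)))•bα + α•cα + β•dα) _ ?_ ?_ ?_ e1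
    · simp only [mul_add, mul_smul_comm, haa, hc1, hd1]
    · simp only [mul_add, mul_smul_comm, h1, hcα, hdα]; module
    · simp only [mul_add, mul_smul_comm, h2b, hf3]; module
  have hfin : (2*(x*β*β + x*β - (α+β)*β - y*((1-α)*(1-β))) + (α+β)*(1-2*(x*β)))•bβ = 0 := by
    linear_combination (norm := module) (2:F) • hw' - (α+β) • hstar
  exact scalar_zero F A _ bβ hfin hbβ0

theorem x_values_restricted (α β : F) (h2 : (2 : F) ≠ 0)
    (hα1 : α ≠ 1) (hβ1 : β ≠ 1) (hαβ : α ≠ β)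
    (hA : IsJAxialAlg F A α β)
    (a b : A) (ha : IsPrimJAxis F A α β a) (hb : IsPrimJAxis F A α β b)
    (hli : LinearIndependent F ![a, b, a * b])
    (x : F) (bα bβ : A) (hbα : bα ∈ eigSp F A a α) (hbβ : bβ ∈ eigSp F A a β)
    (hdec : b = x • a + bα + bβ) :
    β = 1 / 2 ∨ x = -(α + β) / (2 * (α - 1)) := by

  have haa : a*a = a := ha.1.idem
  have hbb : b*b = b := hb.1.idem
  have h1 : a*bα = α•bα := hbα
  have h2b : a*bβ = β•bβ := hbβ
  -- decompose a with respect to b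
  have hatop : a ∈ eigSp F A b 1 ⊔ eigSp F A b α ⊔ eigSp F A b β := by
    rw [hb.1.decomp]; trivial
  obtain ⟨p, hp, aβ, haβm, hpsum⟩ := Submodule.mem_sup.mp hatop
  obtain ⟨u, hu, aα, haαm, hpeq⟩ := Submodule.mem_sup.mp hp
  rw [hb.2] at hu
  obtain ⟨y, hy⟩ := Submodule.mem_span_singleton.mp hu
  have hadec : a = y•b + aα + aβ := by rw [← hpsum, ← hpeq, hy]
  have h3 : b*aα = α•aα := haαm
  have h4 : b*aβ = β•aβ := haβm
  -- fusion data with respect to a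
  obtain ⟨c1, hc1m, cα, hcαm, hf1⟩ := Submodule.mem_sup.mp (ha.1.faa bα hbα bα hbα)
  obtain ⟨d1, hd1m, dα, hdαm, hf2⟩ := Submodule.mem_sup.mp (ha.1.fbb bβ hbβ bβ hbβ)
  have hc1 : a*c1 = c1 := by have h' : a*c1 = (1:F)•c1 := hc1m; rwa [one_smul] at h'
  have hd1 : a*d1 = d1 := by have h' : a*d1 = (1:F)•d1 := hd1m; rwa [one_smul] at h'
  have hcα : a*cα = α•cα := hcαm
  have hdα : a*dα = α•dα := hdαm
  have hf3 : a*(bα*bβ) = β•(bα*bβ) := ha.1.fab bα hbα bβ hbβ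
  -- fusion data with respect to b
  obtain ⟨c1', hc1m', cα', hcαm', hg1⟩ := Submodule.mem_sup.mp (hb.1.faa aα haαm aα haαm)
  obtain ⟨d1', hd1m', dα', hdαm', hg2⟩ := Submodule.mem_sup.mp (hb.1.fbb aβ haβm aβ haβm)
  have hc1' : b*c1' = c1' := by have h' : b*c1' = (1:F)•c1' := hc1m'; rwa [one_smul] at h'
  have hd1' : b*d1' = d1' := by have h' : b*d1' = (1:F)•d1' := hd1m'; rwa [one_smul] at h'
  have hcα' : b*cα' = α•cα' := hcαm'
  have hdα' : b*dα' = α•dα' := hdαm'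
  have hg3 : b*(aα*aβ) = β•(aα*aβ) := hb.1.fab aα haαm aβ haβm
  -- linear independence consequences
  have hns1 : ∀ c d : F, a*b ≠ c•a + d•b := by
    intro c d h
    have h0 : c•a + d•b + (-1 : F)•(a*b) = 0 := by rw [h]; module
    have h5 := Fintype.linearIndependent_iff.mp hli ![c, d, -1]
      (by simpa [Fin.sum_univ_three] using h0) 2
    simp at h5
  have hns2 : ∀ c d : F, b*a ≠ c•b + d•a := by
    intro c d h
    exact hns1 d c (by rw [mul_comm a b, h, add_comm])
  have hbβ0 : bβ ≠ 0 := comp_ne_zero F A α β x b a bα bβ haa h1 h2b hdec hns2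
  have haβ0 : aβ ≠ 0 := comp_ne_zero F A α β y a b aα aβ hbb h3 h4 hadec hns1
  -- the two symmetric key equations
  have E1 := key F A α β x y hα1 hβ1 hαβ a b bα bβ aα aβ c1 cα d1 dα haa hbb
    h1 h2b h3 h4 hc1 hcα hd1 hdα hf1.symm hf2.symm hf3 hdec hadec hbβ0
  have E2 := key F A α β y x hα1 hβ1 hαβ b a aα aβ bα bβ c1' cα' d1' dα' hbb haa
    h3 h4 h1 h2b hc1' hcα' hd1' hdα' hg1.symm hg2.symm hg3 hadec hdec haβ0
  -- scalar algebra
  have h5 : 2*(x-y)*(1-α) = 0 := by linear_combination E1 - E2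
  have h6 : x = y := by
    rcases mul_eq_zero.mp h5 with h | h
    · rcases mul_eq_zero.mp h with h | h
      · exact absurd h h2
      · exact sub_eq_zero.mp h
    · exact absurd h (sub_ne_zero.mpr (Ne.symm hα1))
  rw [← h6] at E1
  have h7 : (2*β - 1)*(2*x*(1-α) - (α+β)) = 0 := by linear_combination E1
  rcases mul_eq_zero.mp h7 with h | h
  · left
    rw [eq_div_iff h2]
    linear_combination h
  · right
    have hd2 : 2*(α-1) ≠ 0 := mul_ne_zero h2 (sub_ne_zero.mpr hα1)
    rw [eq_div_iff hd2]
    linear_combination -h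
end

section
/- Let A be a 2-dimensional primitive J(α,β)-axial algebra satisfying the (⋆) condition, generated by two distinct primitive J(α,β)-axes a and b, and write b = x·a + b_α + b_β with x ∈ F, b_α ∈ A_α(a), b_β ∈ A_β(a). Then one of the following holds: (i) ab = α(a+b) and x = −α/(α−1); (ii) ab = β(a+b), x = −β/(β−1), and β = −1 or β = 1/2. -/
variable (F : Type*) [Field F] (A : Type*) [NonUnitalNonAssocCommRing A]
  [Module F A] [SMulCommClass F A A] [IsScalarTower F A A]

set_option linter.unusedSectionVars false

/-- Directness of the eigenspace decomposition. -/
theorem eig_direct (α β : F) (hα1 : α ≠ 1) (hβ1 : β ≠ 1) (hαβ : α ≠ β)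
    (e u v w : A) (hu : e * u = u) (hv : e * v = α • v) (hw : e * w = β • w)
    (h : u + v + w = 0) : u = 0 ∧ v = 0 ∧ w = 0 := by
  have h1 : u + α • v + β • w = 0 := by
    have := congrArg (fun z => e * z) h
    simpa [mul_add, hu, hv, hw] using this
  have h2 : (α - 1) • v + (β - 1) • w = 0 := by
    linear_combination (norm := module) h1 - h
  have h3 : (α - 1) • (α • v) + (β - 1) • (β • w) = 0 := by
    have := congrArg (fun z => e * z) h2
    simpa [mul_add, mul_smul_comm, hv, hw] using this
  have hw0 : w = 0 := by
    have h4 : ((β - 1) * (β - α)) • w = 0 := by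
      linear_combination (norm := module) h3 - α • h2
    rcases smul_eq_zero.mp h4 with h5 | h5
    · rcases mul_eq_zero.mp h5 with h6 | h6
      · exact absurd (by linear_combination h6) hβ1
      · exact absurd (by linear_combination h6) hαβ.symm
    · exact h5
  have hv0 : v = 0 := by
    have h4 : (α - 1) • v = 0 := by rw [hw0] at h2; simpa using h2
    rcases smul_eq_zero.mp h4 with h5 | h5
    · exact absurd (by linear_combination h5) hα1
    · exact h5
  refine ⟨?_, hv0, hw0⟩
  rw [hv0, hw0] at h; simpa using h

/-- If `u ∈ E_α(e)`, `v ∈ E_β(e)`, and `u` is a combination of `e` and `u + v`,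
then `u = 0` or `v = 0`. -/
theorem eig_dichotomy (α β : F) (hα1 : α ≠ 1) (hβ1 : β ≠ 1) (hαβ : α ≠ β)
    (e u v : A) (he : e * e = e) (hu : e * u = α • u) (hv : e * v = β • v)
    (hmem : ∃ p q : F, u = p • e + q • (u + v)) : u = 0 ∨ v = 0 := by
  obtain ⟨p, q, hpq⟩ := hmem
  have h0 : p • e + (q - 1) • u + q • v = 0 := by
    linear_combination (norm := module) -hpq
  obtain ⟨-, h1, h2⟩ := eig_direct F A α β hα1 hβ1 hαβ e (p • e) ((q - 1) • u) (q • v)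
    (by rw [mul_smul_comm, he]) (by rw [mul_smul_comm, hu, smul_comm])
    (by rw [mul_smul_comm, hv, smul_comm]) h0
  rcases eq_or_ne q 1 with rfl | hq1
  · right; simpa using h2
  · left
    rcases smul_eq_zero.mp h1 with h | h
    · exact absurd (by linear_combination h) hq1
    · exact h

/-- If some `g` spans the complement of `e` and lies in `E_β(e)`, then `E_α(e) = 0`. -/
theorem Ealpha_zero (α β : F) (hα1 : α ≠ 1) (hβ1 : β ≠ 1) (hαβ : α ≠ β)
    (e g : A) (he : e * e = e) (hg : e * g = β • g)
    (hmem : ∀ z : A, ∃ p q : F, z = p • e + q • g) :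
    ∀ w : A, e * w = α • w → w = 0 := by
  intro w hw
  obtain ⟨p, q, hpq⟩ := hmem w
  have h0 : p • e + (-w) + q • g = 0 := by
    linear_combination (norm := module) -hpq
  obtain ⟨-, h1, -⟩ := eig_direct F A α β hα1 hβ1 hαβ e (p • e) (-w) (q • g)
    (by rw [mul_smul_comm, he]) (by rw [mul_neg, hw, smul_neg])
    (by rw [mul_smul_comm, hg, smul_comm]) h0
  exact neg_eq_zero.mp h1

theorem no_mixed (α β : F) (h2 : (2:F) ≠ 0) (hαβ : α ≠ β) (hsum : α + β = 1)
    (e f : A) (he : e * e = e) (hf : f * f = f)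
    (hprim : eigSp F A e 1 = Submodule.span F {e})
    (hfbb : ∀ x ∈ eigSp F A e β, ∀ y ∈ eigSp F A e β,
      x * y ∈ eigSp F A e 1 ⊔ eigSp F A e α)
    (heig : e * (f - e) = β • (f - e))
    (hEα : ∀ w : A, e * w = α • w → w = 0)
    (hprod : e * f = (1 - β) • e + β • f)
    (hindep : ∀ s t : F, s • e + t • f = 0 → s = 0 ∧ t = 0) : False := by
  have hsq : (f - e) * (f - e) = (2*β - 1) • e + (1 - 2*β) • f := by
    have hexp : (f - e) * (f - e) = f*f - e*f - f*e + e*e := by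
      rw [mul_sub, sub_mul, sub_mul]; abel
    rw [hexp, hf, he, mul_comm f e, hprod]
    module
  have hmem := hfbb (f - e) (show (f - e) ∈ eigSp F A e β from heig)
    (f - e) (show (f - e) ∈ eigSp F A e β from heig)
  obtain ⟨u, hu, v, hv, huv⟩ := Submodule.mem_sup.mp hmem
  have hv0 : v = 0 := hEα v hv
  rw [hprim] at hu
  obtain ⟨r, hr⟩ := Submodule.mem_span_singleton.mp hu
  have heq : (2*β - 1 - r) • e + (1 - 2*β) • f = 0 := by
    have : r • e = (f - e) * (f - e) := by rw [← huv, hv0, hr, add_zero]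
    rw [hsq] at this
    linear_combination (norm := module) -this
  obtain ⟨-, hcoef⟩ := hindep _ _ heq
  have hβ : β = 1/2 := by
    rw [eq_div_iff h2]; linear_combination -hcoef
  have hα : α = 1/2 := by
    rw [eq_div_iff h2]; linear_combination 2*hsum + hcoef
  exact hαβ (hα.trans hβ.symm)

set_option maxHeartbeats 1000000 in
theorem two_dimensional_classification (α β : F) (h2 : (2 : F) ≠ 0)
    (hα1 : α ≠ 1) (hβ1 : β ≠ 1) (hαβ : α ≠ β)
    (hA : IsJAxialAlg F A α β) (hstar : StarCond F A α β)
    (hdim : Module.finrank F A = 2)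
    (a b : A) (ha : IsPrimJAxis F A α β a) (hb : IsPrimJAxis F A α β b)
    (hne : a ≠ b) (hgen : NonUnitalAlgebra.adjoin F {a, b} = ⊤)
    (x : F) (bα bβ : A) (hbα : bα ∈ eigSp F A a α) (hbβ : bβ ∈ eigSp F A a β)
    (hdec : b = x • a + bα + bβ) :
    (a * b = α • (a + b) ∧ x = -α / (α - 1)) ∨
    (a * b = β • (a + b) ∧ x = -β / (β - 1) ∧ (β = -1 ∨ β = 1 / 2)) := by
  classical
  obtain ⟨haax, haprim⟩ := ha
  obtain ⟨hbax, hbprim⟩ := hb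
  have hbα' : a * bα = α • bα := hbα
  have hbβ' : a * bβ = β • bβ := hbβ
  -- a and b generate A and are nonzero / independent
  have hkey : ∀ e : A, e * e = e → a ∈ Submodule.span F {e} →
      b ∈ Submodule.span F {e} → False := by
    intro e he hae hbe
    have hmul : ∀ y z : A, y ∈ Submodule.span F {e} → z ∈ Submodule.span F {e} →
        y * z ∈ Submodule.span F {e} := by
      intro y z hy hz
      obtain ⟨s, rfl⟩ := Submodule.mem_span_singleton.mp hy
      obtain ⟨t, rfl⟩ := Submodule.mem_span_singleton.mp hz
      rw [smul_mul_assoc, mul_smul_comm, he, smul_smul]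
      exact Submodule.smul_mem _ _ (Submodule.mem_span_singleton_self e)
    have hle : NonUnitalAlgebra.adjoin F {a, b} ≤
        (Submodule.span F {e}).toNonUnitalSubalgebra hmul := by
      apply NonUnitalAlgebra.adjoin_le
      rintro z (rfl | rfl)
      · exact hae
      · exact hbe
    rw [hgen] at hle
    have htop : (Submodule.span F {e} : Submodule F A) = ⊤ := by
      rw [eq_top_iff]
      intro z _
      exact hle (Set.mem_univ z)
    have hfr := finrank_span_le_card (R := F) ({e} : Set A)
    rw [htop] at hfr
    simp only [finrank_top, Set.toFinset_singleton, Finset.card_singleton, hdim] at hfr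
    omega
  have hst : ∀ s t : F, s • a + t • b = 0 → s = 0 ∧ t = 0 := by
    intro s t h
    rcases eq_or_ne t 0 with rfl | ht
    · have ha0 : a ≠ 0 := by
        intro h0
        exact hkey b hbax.idem (h0 ▸ Submodule.zero_mem _)
          (Submodule.mem_span_singleton_self b)
      rw [zero_smul, add_zero] at h
      exact ⟨by rcases smul_eq_zero.mp h with h | h; exacts [h, absurd h ha0], rfl⟩
    · exfalso
      apply hkey a haax.idem (Submodule.mem_span_singleton_self a)
      have ht' : t • b = (-s) • a := by linear_combination (norm := module) h
      have hb' : b = (t⁻¹ * (-s)) • a := by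
        calc b = t⁻¹ • (t • b) := by rw [smul_smul, inv_mul_cancel₀ ht, one_smul]
          _ = t⁻¹ • ((-s) • a) := by rw [ht']
          _ = (t⁻¹ * (-s)) • a := by rw [smul_smul]
      exact hb' ▸ Submodule.smul_mem _ _ (Submodule.mem_span_singleton_self a)
  have hli : LinearIndependent F ![a, b] := LinearIndependent.pair_iff.mpr hst
  have hFD : FiniteDimensional F A := FiniteDimensional.of_finrank_pos (by omega)
  have hspan : Submodule.span F ({a, b} : Set A) = ⊤ := by
    apply Submodule.eq_top_of_finrank_eq
    have hr : Set.range ![a, b] = ({a, b} : Set A) := by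
      ext z
      simp [Matrix.range_cons, Matrix.range_empty, or_comm]
    rw [← hr, finrank_span_eq_card hli, hdim]
    simp
  have hmemab : ∀ z : A, ∃ p q : F, z = p • a + q • b := by
    intro z
    have : z ∈ Submodule.span F ({a, b} : Set A) := hspan ▸ Submodule.mem_top
    obtain ⟨p, q, h⟩ := Submodule.mem_span_pair.mp this
    exact ⟨p, q, h.symm⟩
  -- eigenvalue of c = b - x • a
  have hbc : bα + bβ = b - x • a := by linear_combination (norm := module) -hdec
  have hmemq1 : ∃ p q : F, bα = p • a + q • (bα + bβ) := by
    obtain ⟨p, q, hpq⟩ := hmemab bα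
    exact ⟨p + q * x, q, by rw [hbc]; linear_combination (norm := module) hpq⟩
  have hl : ∃ l : F, (l = α ∨ l = β) ∧ a * (b - x • a) = l • (b - x • a) := by
    rcases eig_dichotomy F A α β hα1 hβ1 hαβ a bα bβ haax.idem hbα' hbβ' hmemq1 with h0 | h0
    · refine ⟨β, Or.inr rfl, ?_⟩
      have hc : b - x • a = bβ := by rw [← hbc, h0, zero_add]
      rw [hc]; exact hbβ'
    · refine ⟨α, Or.inl rfl, ?_⟩
      have hc : b - x • a = bα := by rw [← hbc, h0, add_zero]
      rw [hc]; exact hbα'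
  obtain ⟨l, hlv, hcl⟩ := hl
  -- star condition: eigenvalue of d = a - x • b
  obtain ⟨aα, haα, aβ, haβ, hadec⟩ := hstar a b ⟨haax, haprim⟩ ⟨hbax, hbprim⟩
    x bα hbα bβ hbβ hdec
  have haα' : b * aα = α • aα := haα
  have haβ' : b * aβ = β • aβ := haβ
  have had : aα + aβ = a - x • b := by linear_combination (norm := module) -hadec
  have hmemq2 : ∃ p q : F, aα = p • b + q • (aα + aβ) := by
    obtain ⟨p, q, hpq⟩ := hmemab aα
    exact ⟨q + p * x, p, by rw [had]; linear_combination (norm := module) hpq⟩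
  have hm : ∃ m : F, (m = α ∨ m = β) ∧ b * (a - x • b) = m • (a - x • b) := by
    rcases eig_dichotomy F A α β hα1 hβ1 hαβ b aα aβ hbax.idem haα' haβ' hmemq2 with h0 | h0
    · refine ⟨β, Or.inr rfl, ?_⟩
      have hc : a - x • b = aβ := by rw [← had, h0, zero_add]
      rw [hc]; exact haβ'
    · refine ⟨α, Or.inl rfl, ?_⟩
      have hc : a - x • b = aα := by rw [← had, h0, add_zero]
      rw [hc]; exact haα'
  obtain ⟨m, hmv, hdm⟩ := hm
  -- the multiplication formulas
  have hab : a * b = x • a + l • (b - x • a) := by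
    calc a * b = a * (x • a + (b - x • a)) := by congr 1; module
      _ = a * (x • a) + a * (b - x • a) := mul_add _ _ _
      _ = x • a + l • (b - x • a) := by rw [mul_smul_comm, haax.idem, hcl]
  have hba : b * a = x • b + m • (a - x • b) := by
    calc b * a = b * (x • b + (a - x • b)) := by congr 1; module
      _ = b * (x • b) + b * (a - x • b) := mul_add _ _ _
      _ = x • b + m • (a - x • b) := by rw [mul_smul_comm, hbax.idem, hdm]
  have heq : x • a + l • (b - x • a) = x • b + m • (a - x • b) := by
    rw [← hab, ← hba, mul_comm]
  obtain ⟨he1, he2⟩ := hst (x - l * x - m) (l - x + m * x)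
    (by linear_combination (norm := module) heq)
  -- shared infrastructure for the fusion arguments
  have hmemac : ∀ z : A, ∃ p q : F, z = p • a + q • (b - x • a) := by
    intro z
    obtain ⟨p, q, hpq⟩ := hmemab z
    exact ⟨p + q * x, q, by linear_combination (norm := module) hpq⟩
  have hmembd : ∀ z : A, ∃ p q : F, z = p • b + q • (a - x • b) := by
    intro z
    obtain ⟨p, q, hpq⟩ := hmemab z
    exact ⟨q + p * x, p, by linear_combination (norm := module) hpq⟩
  rcases eq_or_ne l m with rfl | hlm
  · -- same eigenvalue on both sides: x (1 - l) = l
    have hxl : l - x + l * x = 0 := he2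
    have habl : a * b = l • (a + b) := by
      rw [hab]
      match_scalars
      · linear_combination -hxl
      · ring
    rcases hlv with rfl | rfl
    · -- the eigenvalue is α (note: `α` has been substituted by `l`)
      left
      refine ⟨habl, ?_⟩
      rw [eq_div_iff (sub_ne_zero.mpr hα1)]
      linear_combination hxl
    · -- the eigenvalue is β (note: `β` has been substituted by `l`)
      right
      have hxv : x = -l / (l - 1) := by
        rw [eq_div_iff (sub_ne_zero.mpr hβ1)]
        linear_combination hxl
      refine ⟨habl, hxv, ?_⟩
      have hEα := Ealpha_zero F A α l hα1 hβ1 hαβ a (b - x • a) haax.idem hcl hmemac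
      have hfus := haax.fbb (b - x • a) (show (b - x • a) ∈ eigSp F A a l from hcl)
        (b - x • a) (show (b - x • a) ∈ eigSp F A a l from hcl)
      obtain ⟨u, hu, v, hv, huv⟩ := Submodule.mem_sup.mp hfus
      have hv0 : v = 0 := hEα v hv
      rw [haprim] at hu
      obtain ⟨r, hr⟩ := Submodule.mem_span_singleton.mp hu
      have hsq : (b - x • a) * (b - x • a)
          = (x * x - 2 * (x * l)) • a + (1 - 2 * (x * l)) • b := by
        simp only [mul_sub, sub_mul, smul_mul_assoc, mul_smul_comm, smul_smul,
          hbax.idem, haax.idem, mul_comm b a, habl]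
        module
      have hcoef : (1 : F) - 2 * (x * l) = 0 := by
        have hre : r • a = (x * x - 2 * (x * l)) • a + (1 - 2 * (x * l)) • b := by
          rw [← hsq, ← huv, hv0, hr, add_zero]
        exact (hst (x * x - 2 * (x * l) - r) (1 - 2 * (x * l))
          (by linear_combination (norm := module) -hre)).2
      have hfact : (l + 1) * (2 * l - 1) = 0 := by
        linear_combination (l - 1) * hcoef + 2 * l * hxl
      rcases mul_eq_zero.mp hfact with h | h
      · exact Or.inl (by linear_combination h)
      · exact Or.inr (by rw [eq_div_iff h2]; linear_combination h)
  · -- different eigenvalues: leads to a contradiction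
    exfalso
    have hx1 : x = 1 := by
      have h := mul_eq_zero.mp (show (l - m) * (1 - x) = 0 by linear_combination he1 + he2)
      rcases h with h | h
      · exact absurd (by linear_combination h) hlm
      · linear_combination -h
    have hsum : l + m = 1 := by linear_combination -he1 + (1 - l) * hx1
    rcases hlv with rfl | rfl <;> rcases hmv with rfl | rfl
    · exact hlm rfl
    · -- l = α, m = β (substituted: α ↦ l, β ↦ m); use the b-side fusion
      refine no_mixed F A l m h2 hlm hsum b a hbax.idem haax.idem
        hbprim hbax.fbb ?_
        (Ealpha_zero F A l m hα1 hβ1 hαβ b (a - x • b) hbax.idem hdm hmembd) ?_ ?_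
      · rw [hx1, one_smul] at hdm; exact hdm
      · rw [mul_comm b a, hab, hx1]
        match_scalars
        · linear_combination -hsum
        · linear_combination hsum
      · intro s t h
        obtain ⟨h1', h2'⟩ := hst t s (by linear_combination (norm := module) h)
        exact ⟨h2', h1'⟩
    · -- l = β, m = α (substituted: β ↦ l, α ↦ m); use the a-side fusion
      refine no_mixed F A m l h2 hαβ (by linear_combination hsum) a b haax.idem hbax.idem
        haprim haax.fbb ?_
        (Ealpha_zero F A m l hα1 hβ1 hαβ a (b - x • a) haax.idem hcl hmemac) ?_ hst
      · rw [hx1, one_smul] at hcl; exact hcl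
      · rw [hab, hx1]
        match_scalars <;> ring
    · exact hlm rfl
end

section
/- Let A be a 2-dimensional primitive J(α,β)-axial algebra satisfying the (⋆) condition, generated by two distinct primitive J(α,β)-axes a and b with ab = α(a+b). Suppose moreover that A_α(c)·A_α(c) ⊆ A_1(c) for every primitive axis c ∈ A. Then 2α² = −(α−1); equivalently α = −1 or α = 1/2. -/
variable (F : Type*) [Field F] (A : Type*) [NonUnitalNonAssocCommRing A]
  [Module F A] [SMulCommClass F A A] [IsScalarTower F A A]

/-- Eigenvectors for distinct eigenvalues summing to zero are both zero. -/
lemma eig_indep {c : A} {l m : F} (h : l ≠ m) {u v : A}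
    (hu : c * u = l • u) (hv : c * v = m • v) (hsum : u + v = 0) : u = 0 ∧ v = 0 := by
  have hv' : v = -u := by
    have := hsum
    rw [add_comm] at this
    exact eq_neg_of_add_eq_zero_left this
  have h1 : c * v = l • v := by
    rw [hv', mul_neg, hu, smul_neg]
  have h2 : (m - l) • v = 0 := by
    rw [sub_smul, ← hv, ← h1, sub_self]
  have hml : m - l ≠ 0 := sub_ne_zero.mpr (Ne.symm h)
  have hv0 : v = 0 := by
    rcases smul_eq_zero.mp h2 with h | h
    · exact absurd h hml
    · exact h
  refine ⟨?_, hv0⟩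
  rw [hv0, add_zero] at hsum
  exact hsum

theorem two_dimensional_alpha_restriction (α β : F) (h2 : (2 : F) ≠ 0)
    (hα1 : α ≠ 1) (hβ1 : β ≠ 1) (hαβ : α ≠ β)
    (hA : IsJAxialAlg F A α β) (hstar : StarCond F A α β)
    (hdim : Module.finrank F A = 2)
    (a b : A) (ha : IsPrimJAxis F A α β a) (hb : IsPrimJAxis F A α β b)
    (hne : a ≠ b) (hgen : NonUnitalAlgebra.adjoin F {a, b} = ⊤)
    (hab : a * b = α • (a + b))
    (hfus : ∀ c : A, IsPrimJAxis F A α β c →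
      ∀ x ∈ eigSp F A c α, ∀ y ∈ eigSp F A c α, x * y ∈ eigSp F A c 1) :
    2 * α ^ 2 = -(α - 1) ∧ (α = -1 ∨ α = 1 / 2) := by
  classical
  -- Any multiplicatively closed line containing both a and b is impossible
  have key : ∀ c : A, c * c ∈ Submodule.span F {c} →
      a ∈ Submodule.span F {c} → b ∈ Submodule.span F {c} → False := by
    intro c hcc hac hbc
    set p : Submodule F A := Submodule.span F {c} with hp
    have hmul : ∀ x y : A, x ∈ p → y ∈ p → x * y ∈ p := by
      intro x y hx hy
      obtain ⟨s, rfl⟩ := Submodule.mem_span_singleton.mp hx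
      obtain ⟨t, rfl⟩ := Submodule.mem_span_singleton.mp hy
      rw [smul_mul_smul_comm]
      exact Submodule.smul_mem _ _ hcc
    have hle : NonUnitalAlgebra.adjoin F {a, b} ≤ p.toNonUnitalSubalgebra hmul := by
      apply NonUnitalAlgebra.adjoin_le
      intro x hx
      rcases hx with h | h
      · rw [h]; exact hac
      · rw [Set.mem_singleton_iff.mp h]; exact hbc
    rw [hgen] at hle
    have hPtop : p = ⊤ := top_le_iff.mp fun x _ => hle (Set.mem_univ x)
    have h1 : Module.finrank F p ≤ 1 := by
      rw [hp]
      simpa using finrank_span_le_card (R := F) ({c} : Set A)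
    rw [hPtop, finrank_top, hdim] at h1
    omega
  have hself : ∀ c : A, c * c = c → c ∈ Submodule.span F {c} ∧ c * c ∈ Submodule.span F {c} := by
    intro c hc
    refine ⟨Submodule.mem_span_singleton_self c, ?_⟩
    rw [hc]; exact Submodule.mem_span_singleton_self c
  have ha0 : a ≠ 0 := by
    intro h0
    exact key b (hself b hb.1.idem).2 (h0 ▸ Submodule.zero_mem _)
      (hself b hb.1.idem).1
  -- decompose b in the eigenspaces of a
  have hbtop : b ∈ eigSp F A a 1 ⊔ eigSp F A a α ⊔ eigSp F A a β := by
    rw [ha.1.decomp]; trivial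
  obtain ⟨y, hy, bβ, hbβ, hyb⟩ := Submodule.mem_sup.mp hbtop
  obtain ⟨u, hu, bα, hbα, huy⟩ := Submodule.mem_sup.mp hy
  have hu1 : u ∈ Submodule.span F {a} := by rw [← ha.2]; exact hu
  obtain ⟨x, rfl⟩ := Submodule.mem_span_singleton.mp hu1
  have hbdec : b = x • a + bα + bβ := by rw [← hyb, ← huy]
  have haa : a * a = (1 : F) • a := by rw [one_smul]; exact ha.1.idem
  have habα : a * bα = α • bα := hbα
  have habβ : a * bβ = β • bβ := hbβ
  -- compare the two expressions for a * b
  have e1 : a * b = x • a + α • bα + β • bβ := by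
    rw [hbdec, mul_add, mul_add, mul_smul_comm, ha.1.idem, habα, habβ]
  have e2 : a * b = (α + α * x) • a + α • bα + α • bβ := by
    rw [hab, hbdec]; module
  have hcalc : (x - α * x - α) • a + (β - α) • bβ = 0 := by
    have h := sub_eq_zero_of_eq (e1.symm.trans e2)
    rw [← h]; module
  have hmem1 : a * ((x - α * x - α) • a) = (1 : F) • ((x - α * x - α) • a) :=
    (eigSp F A a 1).smul_mem _ haa
  have hmemβ : a * ((β - α) • bβ) = β • ((β - α) • bβ) :=
    (eigSp F A a β).smul_mem _ habβ
  obtain ⟨hz1, hzβ⟩ := eig_indep F A (Ne.symm hβ1) hmem1 hmemβ hcalc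
  -- conclude bβ = 0 and the first scalar relation
  have hbβ0 : bβ = 0 := by
    rcases smul_eq_zero.mp hzβ with h | h
    · exact absurd h (sub_ne_zero.mpr (Ne.symm hαβ))
    · exact h
  have r1 : x - α * x - α = 0 := by
    rcases smul_eq_zero.mp hz1 with h | h
    · exact h
    · exact absurd h ha0
  rw [hbβ0, add_zero] at hbdec
  -- bα is nonzero
  have hbα0 : bα ≠ 0 := by
    intro h0
    rw [h0, add_zero] at hbdec
    exact key a (hself a ha.1.idem).2 (hself a ha.1.idem).1
      (hbdec ▸ Submodule.smul_mem _ x (Submodule.mem_span_singleton_self a))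
  -- the extra fusion hypothesis: bα * bα is a multiple of a
  have hsq : bα * bα ∈ Submodule.span F {a} := by
    rw [← ha.2]
    exact hfus a ha bα hbα bα hbα
  obtain ⟨μ, hμ⟩ := Submodule.mem_span_singleton.mp hsq
  -- compare the two expressions for b * b = b
  have p1 : (x • a) * (x • a) = (x * x) • a := by
    rw [smul_mul_smul_comm, ha.1.idem]
  have p2 : (x • a) * bα = (x * α) • bα := by
    rw [smul_mul_assoc, habα, smul_smul]
  have p3 : bα * (x • a) = (x * α) • bα := by rw [mul_comm]; exact p2
  have e3 : b * b = (x * x + μ) • a + (2 * x * α) • bα := by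
    rw [hbdec, add_mul, mul_add, mul_add, p1, p2, p3, ← hμ]
    module
  have e4 : b * b = x • a + bα := by rw [hb.1.idem, hbdec]
  have hcalc2 : (x * x + μ - x) • a + (2 * x * α - 1) • bα = 0 := by
    have h := sub_eq_zero_of_eq (e3.symm.trans e4)
    rw [← h]; module
  have hmem1' : a * ((x * x + μ - x) • a) = (1 : F) • ((x * x + μ - x) • a) :=
    (eigSp F A a 1).smul_mem _ haa
  have hmemα : a * ((2 * x * α - 1) • bα) = α • ((2 * x * α - 1) • bα) :=
    (eigSp F A a α).smul_mem _ habα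
  obtain ⟨_, hzα⟩ := eig_indep F A (Ne.symm hα1) hmem1' hmemα hcalc2
  have r2 : 2 * x * α - 1 = 0 := by
    rcases smul_eq_zero.mp hzα with h | h
    · exact h
    · exact absurd h hbα0
  -- finish with field arithmetic
  have main : 2 * α ^ 2 = -(α - 1) := by linear_combination (-2*α) * r1 + (1 - α) * r2
  refine ⟨main, ?_⟩
  have hfac : (α + 1) * (2 * α - 1) = 0 := by linear_combination main
  rcases mul_eq_zero.mp hfac with h | h
  · left; linear_combination h
  · right
    field_simp
    linear_combination h
end

section
/- Let A be a primitive J(α,β)-axial algebra satisfying the (⋆) condition, containing two distinct primitive J(α,β)-axes, and let (·,·) be the unique Frobenius form on A with (c,c) = 1 for every primitive axis c. If A is flat, i.e. (c,d) = 0 for any two distinct primitive axes c, d ∈ A, then β = 1/2, or α = 0, or α = −β. -/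
variable (F : Type*) [Field F] (A : Type*) [NonUnitalNonAssocCommRing A]
  [Module F A] [SMulCommClass F A A] [IsScalarTower F A A]

section MyAux

variable {F A}

/-- Membership in an eigenspace gives the eigen-equation. -/
lemma my_mem_eigSp {a x : A} {l : F} (h : x ∈ eigSp F A a l) : a * x = l • x := h

/-- A Frobenius form is orthogonal between an idempotent and eigenvectors of
eigenvalue different from 1. -/
lemma my_orth (B : A →ₗ[F] A →ₗ[F] F) (hB : IsFrobenius F A B)
    (c : A) (hc : c * c = c) (l : F) (hl : l ≠ 1) (t : A) (ht : c * t = l • t) :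
    B c t = 0 := by
  have h := hB.2.2 c c t
  rw [hc, ht, map_smul, smul_eq_mul] at h
  have h' : (l - 1) * B c t = 0 := by linear_combination h
  exact (mul_eq_zero.1 h').resolve_left (sub_ne_zero.2 hl)

/-- Eigenvectors for distinct eigenvalues are independent. -/
lemma my_indep (α β : F) (hα1 : α ≠ 1) (hβ1 : β ≠ 1) (hαβ : α ≠ β)
    (c t : A) (h1 : t ∈ eigSp F A c 1 ⊔ eigSp F A c α) (h2 : t ∈ eigSp F A c β) :
    t = 0 := by
  obtain ⟨t1, ht1, tα, htα, hsum⟩ := Submodule.mem_sup.1 h1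
  have e1 : c * t1 = t1 := by rw [my_mem_eigSp ht1, one_smul]
  have e2 : c * tα = α • tα := my_mem_eigSp htα
  have e3 : c * t1 + c * tα = β • (t1 + tα) := by
    rw [← mul_add, hsum]
    rw [← my_mem_eigSp h2]
  have E : (1 - β) • t1 = (β - α) • tα := by
    linear_combination (norm := module) e3 - e1 - e2
  have hs1 : c * ((1 - β) • t1) = (1 - β) • t1 := by rw [mul_smul_comm, e1]
  have hs2 : c * ((1 - β) • t1) = α • ((1 - β) • t1) := by
    rw [E, mul_smul_comm, e2, smul_smul, smul_smul, mul_comm]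
  have hz : ((1 : F) - α) • ((1 - β) • t1) = 0 := by
    linear_combination (norm := module) hs2 - hs1
  rw [smul_smul] at hz
  have hco : ((1 : F) - α) * (1 - β) ≠ 0 :=
    mul_ne_zero (sub_ne_zero.2 (Ne.symm hα1)) (sub_ne_zero.2 (Ne.symm hβ1))
  have ht1z : t1 = 0 := (smul_eq_zero.1 hz).resolve_left hco
  have htαz : tα = 0 := by
    have : (β - α) • tα = 0 := by rw [← E, ht1z, smul_zero]
    exact (smul_eq_zero.1 this).resolve_left (sub_ne_zero.2 (Ne.symm hαβ))
  rw [← hsum, ht1z, htαz, add_zero]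

end MyAux

theorem flat_eigenvalue_restriction (α β : F) (h2 : (2 : F) ≠ 0)
    (hα1 : α ≠ 1) (hβ1 : β ≠ 1) (hαβ : α ≠ β)
    (hA : IsJAxialAlg F A α β) (hstar : StarCond F A α β)
    (a b : A) (ha : IsPrimJAxis F A α β a) (hb : IsPrimJAxis F A α β b) (hne : a ≠ b)
    (B : A →ₗ[F] A →ₗ[F] F) (hB : IsFrobenius F A B)
    (hBnorm : ∀ c : A, IsPrimJAxis F A α β c → B c c = 1)
    (hflat : ∀ c d : A, IsPrimJAxis F A α β c → IsPrimJAxis F A α β d →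
      c ≠ d → B c d = 0) :
    β = 1 / 2 ∨ α = 0 ∨ α = -β := by
  -- Decompose b with respect to a
  have hmemb : b ∈ eigSp F A a 1 ⊔ eigSp F A a α ⊔ eigSp F A a β := by
    rw [ha.1.decomp]; trivial
  obtain ⟨y, hy, v, hv, hsum⟩ := Submodule.mem_sup.1 hmemb
  obtain ⟨t1, ht1, u, hu, hyeq⟩ := Submodule.mem_sup.1 hy
  rw [ha.2] at ht1
  obtain ⟨x, hxeq⟩ := Submodule.mem_span_singleton.1 ht1
  have hBau : B a u = 0 := my_orth B hB a ha.1.idem α hα1 u (my_mem_eigSp hu)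
  have hBav : B a v = 0 := my_orth B hB a ha.1.idem β hβ1 v (my_mem_eigSp hv)
  have hx : x = 0 := by
    have h := hflat a b ha hb hne
    rw [← hsum, ← hyeq, ← hxeq] at h
    simp only [map_add, map_smul, smul_eq_mul] at h
    rw [hBau, hBav, hBnorm a ha] at h
    simpa using h
  have hbuv : b = u + v := by
    rw [← hsum, ← hyeq, ← hxeq, hx, zero_smul, zero_add]
  -- Decompose a with respect to b
  have hmema : a ∈ eigSp F A b 1 ⊔ eigSp F A b α ⊔ eigSp F A b β := by
    rw [hb.1.decomp]; trivial
  obtain ⟨y', hy', q, hq, hsum'⟩ := Submodule.mem_sup.1 hmema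
  obtain ⟨s1, hs1, p, hp, hyeq'⟩ := Submodule.mem_sup.1 hy'
  rw [hb.2] at hs1
  obtain ⟨x', hxeq'⟩ := Submodule.mem_span_singleton.1 hs1
  have hBbp : B b p = 0 := my_orth B hB b hb.1.idem α hα1 p (my_mem_eigSp hp)
  have hBbq : B b q = 0 := my_orth B hB b hb.1.idem β hβ1 q (my_mem_eigSp hq)
  have hx' : x' = 0 := by
    have h := hflat b a hb ha hne.symm
    rw [← hsum', ← hyeq', ← hxeq'] at h
    simp only [map_add, map_smul, smul_eq_mul] at h
    rw [hBbp, hBbq, hBnorm b hb] at h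
    simpa using h
  have hapq : a = p + q := by
    rw [← hsum', ← hyeq', ← hxeq', hx', zero_smul, zero_add]
  -- Eigen-equations
  have hu' : a * u = α • u := my_mem_eigSp hu
  have hv' : a * v = β • v := my_mem_eigSp hv
  have hp' : b * p = α • p := my_mem_eigSp hp
  have hq' : b * q = β • q := my_mem_eigSp hq
  -- a*b in two ways
  have hd1 : a * b = α • u + β • v := by rw [hbuv, mul_add, hu', hv']
  have hd2 : a * b = α • p + β • q := by
    rw [mul_comm a b]
    calc b * a = b * (p + q) := by rw [← hapq]
    _ = α • p + β • q := by rw [mul_add, hp', hq']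
  -- b*(a*b) and a*(a*b)
  have hbad : b * (a * b) = (α + β) • (a * b) - (α * β) • a := by
    calc b * (a * b) = b * (α • p + β • q) := by rw [hd2]
    _ = α • (b * p) + β • (b * q) := by rw [mul_add, mul_smul_comm, mul_smul_comm]
    _ = α • (α • p) + β • (β • q) := by rw [hp', hq']
    _ = (α + β) • (α • p + β • q) - (α * β) • (p + q) := by module
    _ = (α + β) • (a * b) - (α * β) • a := by rw [← hd2, ← hapq]
  have haad : a * (a * b) = (α + β) • (a * b) - (α * β) • b := by
    calc a * (a * b) = a * (α • u + β • v) := by rw [hd1]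
    _ = α • (a * u) + β • (a * v) := by rw [mul_add, mul_smul_comm, mul_smul_comm]
    _ = α • (α • u) + β • (β • v) := by rw [hu', hv']
    _ = (α + β) • (α • u + β • v) - (α * β) • (u + v) := by module
    _ = (α + β) • (a * b) - (α * β) • b := by rw [← hd1, ← hbuv]
  -- Fusion: 2 u v = v
  have huvv : u * v + u * v = v := by
    have hee : u * u + u * v + (u * v + v * v) = u + v := by
      have h := hb.1.idem
      rw [hbuv, mul_add, add_mul, add_mul, mul_comm v u] at h
      exact h
    have hmem1 : (u * u + v * v) - u ∈ eigSp F A a 1 ⊔ eigSp F A a α :=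
      sub_mem (add_mem (ha.1.faa u hu u hu) (ha.1.fbb v hv v hv))
        (Submodule.mem_sup_right hu)
    have hmem2 : (u * u + v * v) - u ∈ eigSp F A a β := by
      have hkey : (u * u + v * v) - u = v - (u * v + u * v) := by
        linear_combination (norm := module) hee
      rw [hkey]
      exact sub_mem hv (add_mem (ha.1.fab u hu v hv) (ha.1.fab u hu v hv))
    have hz := my_indep α β hα1 hβ1 hαβ a _ hmem1 hmem2
    linear_combination (norm := module) hee - hz
  -- Fusion: 2 p q = q
  have hpqq : p * q + p * q = q := by
    have hee : p * p + p * q + (p * q + q * q) = p + q := by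
      have h := ha.1.idem
      rw [hapq, mul_add, add_mul, add_mul, mul_comm q p] at h
      exact h
    have hmem1 : (p * p + q * q) - p ∈ eigSp F A b 1 ⊔ eigSp F A b α :=
      sub_mem (add_mem (hb.1.faa p hp p hp) (hb.1.fbb q hq q hq))
        (Submodule.mem_sup_right hp)
    have hmem2 : (p * p + q * q) - p ∈ eigSp F A b β := by
      have hkey : (p * p + q * q) - p = q - (p * q + p * q) := by
        linear_combination (norm := module) hee
      rw [hkey]
      exact sub_mem hq (add_mem (hb.1.fab p hp q hq) (hb.1.fab p hp q hq))
    have hz := my_indep α β hα1 hβ1 hαβ b _ hmem1 hmem2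
    linear_combination (norm := module) hee - hz
  -- Express scaled eigenvectors in terms of a, b, a*b
  set k : F := β - α with hk
  have hkne : k ≠ 0 := sub_ne_zero.2 (Ne.symm hαβ)
  have hku : k • u = β • b - a * b := by rw [hd1, hbuv]; module
  have hkv : k • v = a * b - α • b := by rw [hd1, hbuv]; module
  have hkp : k • p = β • a - a * b := by rw [hd2, hapq]; module
  have hkq : k • q = a * b - α • a := by rw [hd2, hapq]; module
  -- Expanded product identities
  have hexpb : (β • b - a * b) * (a * b - α • b)
      = (α + β) • (b * (a * b)) - (α * β) • b - (a * b) * (a * b) := by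
    rw [sub_mul, mul_sub, mul_sub, smul_mul_assoc, smul_mul_assoc,
      mul_smul_comm, mul_smul_comm, smul_smul, hb.1.idem, mul_comm (a * b) b]
    module
  have hexpa : (β • a - a * b) * (a * b - α • a)
      = (α + β) • (a * (a * b)) - (α * β) • a - (a * b) * (a * b) := by
    rw [sub_mul, mul_sub, mul_sub, smul_mul_assoc, smul_mul_assoc,
      mul_smul_comm, mul_smul_comm, smul_smul, ha.1.idem, mul_comm (a * b) a]
    module
  -- Key equations
  have E1 : (k * k) • v
      = ((α + β) • (b * (a * b)) - (α * β) • b - (a * b) * (a * b))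
        + ((α + β) • (b * (a * b)) - (α * β) • b - (a * b) * (a * b)) := by
    calc (k * k) • v = (k * k) • (u * v) + (k * k) • (u * v) := by
          rw [← smul_add, huvv]
    _ = (k • u) * (k • v) + (k • u) * (k • v) := by
          rw [smul_mul_assoc, mul_smul_comm, smul_smul]
    _ = (β • b - a * b) * (a * b - α • b) + (β • b - a * b) * (a * b - α • b) := by
          rw [hku, hkv]
    _ = _ := by rw [hexpb]
  have E2 : (k * k) • q
      = ((α + β) • (a * (a * b)) - (α * β) • a - (a * b) * (a * b))
        + ((α + β) • (a * (a * b)) - (α * β) • a - (a * b) * (a * b)) := by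
    calc (k * k) • q = (k * k) • (p * q) + (k * k) • (p * q) := by
          rw [← smul_add, hpqq]
    _ = (k • p) * (k • q) + (k • p) * (k • q) := by
          rw [smul_mul_assoc, mul_smul_comm, smul_smul]
    _ = (β • a - a * b) * (a * b - α • a) + (β • a - a * b) * (a * b - α • a) := by
          rw [hkp, hkq]
    _ = _ := by rw [hexpa]
  -- Combine everything
  have hfin : (α * ((α + β) * (2 * β - 1))) • (a - b) = 0 := by
    linear_combination (norm := module) E1 - E2 + (2 * (α + β)) • hbad
      - (2 * (α + β)) • haad - k • hkv + k • hkq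
  have hc : α * ((α + β) * (2 * β - 1)) = 0 :=
    (smul_eq_zero.1 hfin).resolve_right (sub_ne_zero.2 hne)
  rcases mul_eq_zero.1 hc with h | h
  · exact Or.inr (Or.inl h)
  · rcases mul_eq_zero.1 h with h' | h'
    · exact Or.inr (Or.inr (eq_neg_of_add_eq_zero_left h'))
    · left
      field_simp
      linear_combination h'
end

section
/- Let A be a primitive J(α,β)-axial algebra satisfying the (⋆) condition and let a ∈ A be a primitive J(α,β)-axis with A_α(a) ≠ 0. Then the Seress identity a(xy) = (ax)y holds for all x ∈ A and all y ∈ A_1(a) ⊕ A_α(a) if and only if α = 0. -/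
variable (F : Type*) [Field F] (A : Type*) [NonUnitalNonAssocCommRing A]
  [Module F A] [SMulCommClass F A A] [IsScalarTower F A A]

/-! ### Auxiliary development -/

section JAux
set_option linter.unusedSectionVars false

variable {F₀ : Type*} [Field F₀] {A₀ : Type*} [NonUnitalNonAssocCommRing A₀]
  [Module F₀ A₀] [SMulCommClass F₀ A₀ A₀] [IsScalarTower F₀ A₀ A₀]

theorem mem_eigSp' {r z : A₀} {l : F₀} : z ∈ eigSp F₀ A₀ r l ↔ r * z = l • z := Iff.rfl

theorem jsmul_eq_zero {c : F₀} {x : A₀} (hc : c ≠ 0) (h : c • x = 0) : x = 0 := by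
  have h2 := congrArg (fun t => c⁻¹ • t) h
  simpa [smul_smul, inv_mul_cancel₀ hc] using h2

/-- `r` is a nonzero primitive axis of type `J(0,β)`. -/
def JAxP (β : F₀) (r : A₀) : Prop := IsPrimJAxis F₀ A₀ 0 β r ∧ r ≠ 0

open Classical in
noncomputable def JdecT (β : F₀) (r z : A₀) : F₀ × A₀ × A₀ :=
  if h : ∃ t : F₀ × A₀ × A₀, t.2.1 ∈ eigSp F₀ A₀ r 0 ∧ t.2.2 ∈ eigSp F₀ A₀ r β ∧
      z = t.1 • r + t.2.1 + t.2.2 then h.choose else (0, 0, 0)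

noncomputable def Jlam (β : F₀) (r z : A₀) : F₀ := (JdecT β r z).1
noncomputable def Jc0 (β : F₀) (r z : A₀) : A₀ := (JdecT β r z).2.1
noncomputable def Jcb (β : F₀) (r z : A₀) : A₀ := (JdecT β r z).2.2

theorem Jexists_dec {β : F₀} {r : A₀} (hr : IsPrimJAxis F₀ A₀ 0 β r) (z : A₀) :
    ∃ t : F₀ × A₀ × A₀, t.2.1 ∈ eigSp F₀ A₀ r 0 ∧ t.2.2 ∈ eigSp F₀ A₀ r β ∧
      z = t.1 • r + t.2.1 + t.2.2 := by
  have hz : z ∈ eigSp F₀ A₀ r 1 ⊔ eigSp F₀ A₀ r 0 ⊔ eigSp F₀ A₀ r β := by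
    rw [hr.1.decomp]; trivial
  obtain ⟨w, hw, s, hs, hws⟩ := Submodule.mem_sup.mp hz
  obtain ⟨z1, hz1, u, hu, rfl⟩ := Submodule.mem_sup.mp hw
  rw [hr.2, Submodule.mem_span_singleton] at hz1
  obtain ⟨c, rfl⟩ := hz1
  exact ⟨(c, u, s), hu, hs, hws.symm⟩

theorem Jdec_spec {β : F₀} {r : A₀} (hr : IsPrimJAxis F₀ A₀ 0 β r) (z : A₀) :
    Jc0 β r z ∈ eigSp F₀ A₀ r 0 ∧ Jcb β r z ∈ eigSp F₀ A₀ r β ∧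
      z = Jlam β r z • r + Jc0 β r z + Jcb β r z := by
  have h := Jexists_dec hr z
  simp only [Jlam, Jc0, Jcb, JdecT, dif_pos h]
  exact h.choose_spec

theorem Jindep {β : F₀} (hβ0 : β ≠ 0) (hβ1 : β ≠ 1) {r z1 z0 zb : A₀}
    (h1 : z1 ∈ eigSp F₀ A₀ r 1) (h0 : z0 ∈ eigSp F₀ A₀ r 0) (hb : zb ∈ eigSp F₀ A₀ r β)
    (h : z1 + z0 + zb = 0) : z1 = 0 ∧ z0 = 0 ∧ zb = 0 := by
  rw [mem_eigSp', one_smul] at h1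
  rw [mem_eigSp', zero_smul] at h0
  rw [mem_eigSp'] at hb
  have e1 : z1 + β • zb = 0 := by
    have h' := congrArg (fun t => r * t) h
    simpa [mul_add, h1, h0, hb] using h'
  have e2 : z1 + (β * β) • zb = 0 := by
    have h' := congrArg (fun t => r * t) e1
    simpa [mul_add, h1, hb, mul_smul_comm, smul_smul] using h'
  have e3 : (β * β - β) • zb = 0 := by
    have h' : (z1 + (β * β) • zb) - (z1 + β • zb) = 0 := by rw [e2, e1, sub_zero]
    rw [sub_smul, ← h']
    abel
  have hne : β * β - β ≠ 0 := by
    have h5 : β * (β - 1) ≠ 0 := mul_ne_zero hβ0 (sub_ne_zero.mpr hβ1)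
    intro hc; apply h5; rw [← hc]; ring
  have hzb : zb = 0 := jsmul_eq_zero hne e3
  have hz1 : z1 = 0 := by simpa [hzb] using e1
  refine ⟨hz1, ?_, hzb⟩
  simpa [hz1, hzb] using h

theorem Jdec_unique {β : F₀} (hβ0 : β ≠ 0) (hβ1 : β ≠ 1) {r : A₀} (hr : JAxP β r)
    {z : A₀} {c : F₀} {u s : A₀}
    (hu : u ∈ eigSp F₀ A₀ r 0) (hs : s ∈ eigSp F₀ A₀ r β) (hz : z = c • r + u + s) :
    Jlam β r z = c ∧ Jc0 β r z = u ∧ Jcb β r z = s := by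
  obtain ⟨hu', hs', hz'⟩ := Jdec_spec hr.1 z
  have hr1 : r ∈ eigSp F₀ A₀ r 1 := by rw [mem_eigSp', one_smul]; exact hr.1.1.idem
  have hd : (c - Jlam β r z) • r + (u - Jc0 β r z) + (s - Jcb β r z)
      = (c • r + u + s) - (Jlam β r z • r + Jc0 β r z + Jcb β r z) := by
    rw [sub_smul]; abel
  rw [← hz, ← hz', sub_self] at hd
  obtain ⟨e1, e2, e3⟩ := Jindep hβ0 hβ1 (Submodule.smul_mem _ _ hr1)
    (Submodule.sub_mem _ hu hu') (Submodule.sub_mem _ hs hs') hd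
  have hc : Jlam β r z = c := by
    by_contra hne
    exact hr.2 (jsmul_eq_zero (sub_ne_zero.mpr fun hcc => hne hcc.symm) e1)
  exact ⟨hc, (sub_eq_zero.mp e2).symm, (sub_eq_zero.mp e3).symm⟩

theorem Jdec_add {β : F₀} (hβ0 : β ≠ 0) (hβ1 : β ≠ 1) {r : A₀} (hr : JAxP β r) (z w : A₀) :
    Jlam β r (z + w) = Jlam β r z + Jlam β r w ∧ Jc0 β r (z + w) = Jc0 β r z + Jc0 β r w ∧
      Jcb β r (z + w) = Jcb β r z + Jcb β r w := by
  obtain ⟨hu1, hs1, h1⟩ := Jdec_spec hr.1 z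
  obtain ⟨hu2, hs2, h2⟩ := Jdec_spec hr.1 w
  refine Jdec_unique hβ0 hβ1 hr (add_mem hu1 hu2) (add_mem hs1 hs2) ?_
  nth_rewrite 1 [h1]
  nth_rewrite 1 [h2]
  rw [add_smul]; abel

theorem Jdec_smul {β : F₀} (hβ0 : β ≠ 0) (hβ1 : β ≠ 1) {r : A₀} (hr : JAxP β r) (t : F₀) (z : A₀) :
    Jlam β r (t • z) = t * Jlam β r z ∧ Jc0 β r (t • z) = t • Jc0 β r z ∧
      Jcb β r (t • z) = t • Jcb β r z := by
  obtain ⟨hu1, hs1, h1⟩ := Jdec_spec hr.1 z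
  refine Jdec_unique hβ0 hβ1 hr (Submodule.smul_mem _ _ hu1) (Submodule.smul_mem _ _ hs1) ?_
  nth_rewrite 1 [h1]
  rw [smul_add, smul_add, smul_smul]

theorem Jdec_zero {β : F₀} (hβ0 : β ≠ 0) (hβ1 : β ≠ 1) {r : A₀} (hr : JAxP β r) :
    Jlam β r (0 : A₀) = 0 ∧ Jc0 β r (0 : A₀) = 0 ∧ Jcb β r (0 : A₀) = 0 :=
  Jdec_unique hβ0 hβ1 hr (zero_mem _) (zero_mem _) (by rw [zero_smul, add_zero, add_zero])

theorem Jdec_neg {β : F₀} (hβ0 : β ≠ 0) (hβ1 : β ≠ 1) {r : A₀} (hr : JAxP β r) (z : A₀) :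
    Jlam β r (-z) = -Jlam β r z ∧ Jc0 β r (-z) = -Jc0 β r z ∧ Jcb β r (-z) = -Jcb β r z := by
  obtain ⟨hu1, hs1, h1⟩ := Jdec_spec hr.1 z
  refine Jdec_unique hβ0 hβ1 hr (neg_mem hu1) (neg_mem hs1) ?_
  nth_rewrite 1 [h1]
  rw [neg_smul]; abel

theorem Jdec_self {β : F₀} (hβ0 : β ≠ 0) (hβ1 : β ≠ 1) {r : A₀} (hr : JAxP β r) :
    Jlam β r r = 1 ∧ Jc0 β r r = 0 ∧ Jcb β r r = 0 :=
  Jdec_unique hβ0 hβ1 hr (zero_mem _) (zero_mem _) (by rw [one_smul, add_zero, add_zero])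

theorem Jdec_of_E0 {β : F₀} (hβ0 : β ≠ 0) (hβ1 : β ≠ 1) {r : A₀} (hr : JAxP β r) {z : A₀}
    (hz : z ∈ eigSp F₀ A₀ r 0) :
    Jlam β r z = 0 ∧ Jc0 β r z = z ∧ Jcb β r z = 0 :=
  Jdec_unique hβ0 hβ1 hr hz (zero_mem _) (by rw [zero_smul, zero_add, add_zero])

theorem Jdec_of_Eb {β : F₀} (hβ0 : β ≠ 0) (hβ1 : β ≠ 1) {r : A₀} (hr : JAxP β r) {z : A₀}
    (hz : z ∈ eigSp F₀ A₀ r β) :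
    Jlam β r z = 0 ∧ Jc0 β r z = 0 ∧ Jcb β r z = z :=
  Jdec_unique hβ0 hβ1 hr (zero_mem _) hz (by rw [zero_smul, zero_add, zero_add])

theorem Jmul_dec {β : F₀} {r : A₀} (hr : IsPrimJAxis F₀ A₀ 0 β r) (z : A₀) :
    r * z = Jlam β r z • r + β • Jcb β r z := by
  obtain ⟨hu, hs, h⟩ := Jdec_spec hr z
  rw [mem_eigSp', zero_smul] at hu
  rw [mem_eigSp'] at hs
  nth_rewrite 1 [h]
  rw [mul_add, mul_add, mul_smul_comm, hr.1.idem, hu, hs, add_zero]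

/-! ### The Miyamoto involution -/

noncomputable def Jtau (β : F₀) (r z : A₀) : A₀ := z - (2 : F₀) • Jcb β r z

theorem Jtau_spec {β : F₀} {r : A₀} (hr : IsPrimJAxis F₀ A₀ 0 β r) (z : A₀) :
    Jtau β r z = Jlam β r z • r + Jc0 β r z - Jcb β r z := by
  obtain ⟨-, -, h⟩ := Jdec_spec hr z
  rw [Jtau]
  nth_rewrite 1 [h]
  rw [two_smul]; abel

theorem Jdec_tau {β : F₀} (hβ0 : β ≠ 0) (hβ1 : β ≠ 1) {r : A₀} (hr : JAxP β r) (z : A₀) :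
    Jlam β r (Jtau β r z) = Jlam β r z ∧ Jc0 β r (Jtau β r z) = Jc0 β r z ∧
      Jcb β r (Jtau β r z) = -Jcb β r z := by
  obtain ⟨hu, hs, -⟩ := Jdec_spec hr.1 z
  exact Jdec_unique hβ0 hβ1 hr hu (neg_mem hs)
    (by rw [Jtau_spec hr.1, sub_eq_add_neg])

theorem Jtau_tau {β : F₀} (hβ0 : β ≠ 0) (hβ1 : β ≠ 1) {r : A₀} (hr : JAxP β r) (z : A₀) :
    Jtau β r (Jtau β r z) = z := by
  rw [Jtau, (Jdec_tau hβ0 hβ1 hr z).2.2, Jtau, smul_neg]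
  abel

theorem Jtau_add {β : F₀} (hβ0 : β ≠ 0) (hβ1 : β ≠ 1) {r : A₀} (hr : JAxP β r) (z w : A₀) :
    Jtau β r (z + w) = Jtau β r z + Jtau β r w := by
  rw [Jtau, Jtau, Jtau, (Jdec_add hβ0 hβ1 hr z w).2.2, smul_add]; abel

theorem Jtau_smul {β : F₀} (hβ0 : β ≠ 0) (hβ1 : β ≠ 1) {r : A₀} (hr : JAxP β r) (t : F₀) (z : A₀) :
    Jtau β r (t • z) = t • Jtau β r z := by
  rw [Jtau, Jtau, (Jdec_smul hβ0 hβ1 hr t z).2.2, smul_sub, smul_comm]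

theorem Jtau_neg {β : F₀} (hβ0 : β ≠ 0) (hβ1 : β ≠ 1) {r : A₀} (hr : JAxP β r) (z : A₀) :
    Jtau β r (-z) = -Jtau β r z := by
  rw [Jtau, Jtau, (Jdec_neg hβ0 hβ1 hr z).2.2, smul_neg]; abel

theorem Jtau_sub {β : F₀} (hβ0 : β ≠ 0) (hβ1 : β ≠ 1) {r : A₀} (hr : JAxP β r) (z w : A₀) :
    Jtau β r (z - w) = Jtau β r z - Jtau β r w := by
  rw [sub_eq_add_neg, Jtau_add hβ0 hβ1 hr, Jtau_neg hβ0 hβ1 hr, sub_eq_add_neg]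

theorem Jtau_zero {β : F₀} (hβ0 : β ≠ 0) (hβ1 : β ≠ 1) {r : A₀} (hr : JAxP β r) :
    Jtau β r (0 : A₀) = 0 := by
  rw [Jtau, (Jdec_zero hβ0 hβ1 hr).2.2, smul_zero, sub_zero]

theorem Jtau_self {β : F₀} (hβ0 : β ≠ 0) (hβ1 : β ≠ 1) {r : A₀} (hr : JAxP β r) :
    Jtau β r r = r := by
  rw [Jtau, (Jdec_self hβ0 hβ1 hr).2.2, smul_zero, sub_zero]

theorem Jtau_of_E0 {β : F₀} (hβ0 : β ≠ 0) (hβ1 : β ≠ 1) {r : A₀} (hr : JAxP β r) {z : A₀}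
    (hz : z ∈ eigSp F₀ A₀ r 0) : Jtau β r z = z := by
  rw [Jtau, (Jdec_of_E0 hβ0 hβ1 hr hz).2.2, smul_zero, sub_zero]

theorem Jtau_of_Eb {β : F₀} (hβ0 : β ≠ 0) (hβ1 : β ≠ 1) {r : A₀} (hr : JAxP β r) {z : A₀}
    (hz : z ∈ eigSp F₀ A₀ r β) : Jtau β r z = -z := by
  rw [Jtau, (Jdec_of_Eb hβ0 hβ1 hr hz).2.2, two_smul]; abel

/-! ### Fusion, multiplicativity of `Jtau` -/

theorem Jr_mem_E1 {β : F₀} {r : A₀} (hr : IsPrimJAxis F₀ A₀ 0 β r) :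
    r ∈ eigSp F₀ A₀ r 1 := by
  rw [mem_eigSp', one_smul]; exact hr.1.idem

theorem Jeven_mul_even {β : F₀} {r : A₀} (hr : IsPrimJAxis F₀ A₀ 0 β r) {x y : A₀}
    (hx : x ∈ eigSp F₀ A₀ r 1 ⊔ eigSp F₀ A₀ r 0)
    (hy : y ∈ eigSp F₀ A₀ r 1 ⊔ eigSp F₀ A₀ r 0) :
    x * y ∈ eigSp F₀ A₀ r 1 ⊔ eigSp F₀ A₀ r 0 := by
  obtain ⟨x1, hx1, x0, hx0, rfl⟩ := Submodule.mem_sup.mp hx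
  obtain ⟨y1, hy1, y0, hy0, rfl⟩ := Submodule.mem_sup.mp hy
  rw [add_mul, mul_add, mul_add]
  refine add_mem (add_mem ?_ ?_) (add_mem ?_ ?_)
  · exact Submodule.mem_sup_left (hr.1.f11 _ hx1 _ hy1)
  · exact Submodule.mem_sup_right (hr.1.f1a _ hx1 _ hy0)
  · rw [mul_comm]; exact Submodule.mem_sup_right (hr.1.f1a _ hy1 _ hx0)
  · exact hr.1.faa _ hx0 _ hy0

theorem Jeven_mul_odd {β : F₀} {r : A₀} (hr : IsPrimJAxis F₀ A₀ 0 β r) {x s : A₀}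
    (hx : x ∈ eigSp F₀ A₀ r 1 ⊔ eigSp F₀ A₀ r 0) (hs : s ∈ eigSp F₀ A₀ r β) :
    x * s ∈ eigSp F₀ A₀ r β := by
  obtain ⟨x1, hx1, x0, hx0, rfl⟩ := Submodule.mem_sup.mp hx
  rw [add_mul]
  exact add_mem (hr.1.f1b _ hx1 _ hs) (hr.1.fab _ hx0 _ hs)

theorem Jtau_mul_aux {β : F₀} (hβ0 : β ≠ 0) (hβ1 : β ≠ 1) {r : A₀} (hr : JAxP β r)
    {z w : A₀} {cz cw : F₀} {uz uw sz sw : A₀}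
    (huz : uz ∈ eigSp F₀ A₀ r 0) (hsz : sz ∈ eigSp F₀ A₀ r β)
    (huw : uw ∈ eigSp F₀ A₀ r 0) (hsw : sw ∈ eigSp F₀ A₀ r β)
    (h1 : z = cz • r + uz + sz) (h2 : w = cw • r + uw + sw) :
    Jtau β r (z * w) = Jtau β r z * Jtau β r w := by
  have hdz := Jdec_unique hβ0 hβ1 hr huz hsz h1
  have hdw := Jdec_unique hβ0 hβ1 hr huw hsw h2
  have hPm : cz • r + uz ∈ eigSp F₀ A₀ r 1 ⊔ eigSp F₀ A₀ r 0 :=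
    add_mem (Submodule.mem_sup_left (Submodule.smul_mem _ _ (Jr_mem_E1 hr.1)))
      (Submodule.mem_sup_right huz)
  have hPm' : cw • r + uw ∈ eigSp F₀ A₀ r 1 ⊔ eigSp F₀ A₀ r 0 :=
    add_mem (Submodule.mem_sup_left (Submodule.smul_mem _ _ (Jr_mem_E1 hr.1)))
      (Submodule.mem_sup_right huw)
  have hEV : (cz • r + uz) * (cw • r + uw) + sz * sw ∈
      eigSp F₀ A₀ r 1 ⊔ eigSp F₀ A₀ r 0 :=
    add_mem (Jeven_mul_even hr.1 hPm hPm') (hr.1.1.fbb _ hsz _ hsw)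
  have hOD : (cz • r + uz) * sw + sz * (cw • r + uw) ∈ eigSp F₀ A₀ r β :=
    add_mem (Jeven_mul_odd hr.1 hPm hsw)
      (by rw [mul_comm]; exact Jeven_mul_odd hr.1 hPm' hsz)
  obtain ⟨w1, hw1, u', hu', hEVeq⟩ := Submodule.mem_sup.mp hEV
  rw [hr.1.2, Submodule.mem_span_singleton] at hw1
  obtain ⟨c', rfl⟩ := hw1
  have hexp : z * w = ((cz • r + uz) * (cw • r + uw) + sz * sw) +
      ((cz • r + uz) * sw + sz * (cw • r + uw)) := by
    rw [h1, h2]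
    simp only [mul_add, add_mul]
    abel
  have hzw : z * w = c' • r + u' + ((cz • r + uz) * sw + sz * (cw • r + uw)) := by
    rw [hexp, ← hEVeq]
  have hcb := (Jdec_unique hβ0 hβ1 hr hu' hOD hzw).2.2
  have hτz : Jtau β r z = (cz • r + uz) - sz := by
    rw [Jtau, hdz.2.2, h1, two_smul]; abel
  have hτw : Jtau β r w = (cw • r + uw) - sw := by
    rw [Jtau, hdw.2.2, h2, two_smul]; abel
  rw [Jtau, hcb, hτz, hτw, hexp, two_smul]
  simp only [mul_add, add_mul, mul_sub, sub_mul]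
  abel

theorem Jtau_mul {β : F₀} (hβ0 : β ≠ 0) (hβ1 : β ≠ 1) {r : A₀} (hr : JAxP β r) (z w : A₀) :
    Jtau β r (z * w) = Jtau β r z * Jtau β r w := by
  obtain ⟨hu1, hs1, h1⟩ := Jdec_spec hr.1 z
  obtain ⟨hu2, hs2, h2⟩ := Jdec_spec hr.1 w
  exact Jtau_mul_aux hβ0 hβ1 hr hu1 hs1 hu2 hs2 h1 h2

theorem Jmem_eig_tau {β : F₀} (hβ0 : β ≠ 0) (hβ1 : β ≠ 1) {r : A₀} (hr : JAxP β r)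
    {p z : A₀} {l : F₀} (h : z ∈ eigSp F₀ A₀ p l) :
    Jtau β r z ∈ eigSp F₀ A₀ (Jtau β r p) l := by
  rw [mem_eigSp'] at h ⊢
  rw [← Jtau_mul hβ0 hβ1 hr, h, Jtau_smul hβ0 hβ1 hr]

theorem Jmem_eig_tau' {β : F₀} (hβ0 : β ≠ 0) (hβ1 : β ≠ 1) {r : A₀} (hr : JAxP β r)
    {p z : A₀} {l : F₀} (h : z ∈ eigSp F₀ A₀ (Jtau β r p) l) :
    Jtau β r z ∈ eigSp F₀ A₀ p l := by
  have h2 := Jmem_eig_tau hβ0 hβ1 hr h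
  rwa [Jtau_tau hβ0 hβ1 hr] at h2

/-! ### Transport of axes under the Miyamoto involution -/

theorem Jfusion_tau1 {β : F₀} (hβ0 : β ≠ 0) (hβ1 : β ≠ 1) {r : A₀} (hr : JAxP β r)
    {p : A₀} {l m n : F₀}
    (hf : ∀ x ∈ eigSp F₀ A₀ p l, ∀ y ∈ eigSp F₀ A₀ p m, x * y ∈ eigSp F₀ A₀ p n) :
    ∀ x ∈ eigSp F₀ A₀ (Jtau β r p) l, ∀ y ∈ eigSp F₀ A₀ (Jtau β r p) m,
      x * y ∈ eigSp F₀ A₀ (Jtau β r p) n := by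
  intro x hx y hy
  have h1 := hf _ (Jmem_eig_tau' hβ0 hβ1 hr hx) _ (Jmem_eig_tau' hβ0 hβ1 hr hy)
  have h2 := Jmem_eig_tau hβ0 hβ1 hr h1
  rwa [Jtau_mul hβ0 hβ1 hr, Jtau_tau hβ0 hβ1 hr, Jtau_tau hβ0 hβ1 hr] at h2

theorem Jfusion_tau2 {β : F₀} (hβ0 : β ≠ 0) (hβ1 : β ≠ 1) {r : A₀} (hr : JAxP β r)
    {p : A₀} {l m : F₀}
    (hf : ∀ x ∈ eigSp F₀ A₀ p l, ∀ y ∈ eigSp F₀ A₀ p m,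
      x * y ∈ eigSp F₀ A₀ p 1 ⊔ eigSp F₀ A₀ p 0) :
    ∀ x ∈ eigSp F₀ A₀ (Jtau β r p) l, ∀ y ∈ eigSp F₀ A₀ (Jtau β r p) m,
      x * y ∈ eigSp F₀ A₀ (Jtau β r p) 1 ⊔ eigSp F₀ A₀ (Jtau β r p) 0 := by
  intro x hx y hy
  have h1 := hf _ (Jmem_eig_tau' hβ0 hβ1 hr hx) _ (Jmem_eig_tau' hβ0 hβ1 hr hy)
  obtain ⟨w1, hw1, w0, hw0, heq⟩ := Submodule.mem_sup.mp h1
  have h3 : Jtau β r (w1 + w0) = x * y := by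
    rw [heq, Jtau_mul hβ0 hβ1 hr, Jtau_tau hβ0 hβ1 hr, Jtau_tau hβ0 hβ1 hr]
  rw [Jtau_add hβ0 hβ1 hr] at h3
  rw [← h3]
  exact add_mem (Submodule.mem_sup_left (Jmem_eig_tau hβ0 hβ1 hr hw1))
    (Submodule.mem_sup_right (Jmem_eig_tau hβ0 hβ1 hr hw0))

theorem JAxP_tau {β : F₀} (hβ0 : β ≠ 0) (hβ1 : β ≠ 1) {r : A₀} (hr : JAxP β r)
    {p : A₀} (hp : JAxP β p) : JAxP β (Jtau β r p) := by
  have hidem : Jtau β r p * Jtau β r p = Jtau β r p := by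
    rw [← Jtau_mul hβ0 hβ1 hr, hp.1.1.idem]
  have hmem1 : Jtau β r p ∈ eigSp F₀ A₀ (Jtau β r p) 1 := by
    rw [mem_eigSp', one_smul]; exact hidem
  have hdecomp : eigSp F₀ A₀ (Jtau β r p) 1 ⊔ eigSp F₀ A₀ (Jtau β r p) 0 ⊔
      eigSp F₀ A₀ (Jtau β r p) β = ⊤ := by
    rw [Submodule.eq_top_iff']
    intro z
    obtain ⟨hu, hs, h⟩ := Jdec_spec hp.1 (Jtau β r z)
    have hz : z = Jlam β p (Jtau β r z) • Jtau β r p + Jtau β r (Jc0 β p (Jtau β r z)) +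
        Jtau β r (Jcb β p (Jtau β r z)) := by
      have h4 := congrArg (Jtau β r) h
      rw [Jtau_tau hβ0 hβ1 hr] at h4
      conv_lhs => rw [h4]
      rw [Jtau_add hβ0 hβ1 hr, Jtau_add hβ0 hβ1 hr, Jtau_smul hβ0 hβ1 hr]
    rw [hz]
    refine Submodule.add_mem _ (Submodule.add_mem _ ?_ ?_) ?_
    · exact Submodule.mem_sup_left (Submodule.mem_sup_left (Submodule.smul_mem _ _ hmem1))
    · exact Submodule.mem_sup_left
        (Submodule.mem_sup_right (Jmem_eig_tau hβ0 hβ1 hr hu))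
    · exact Submodule.mem_sup_right (Jmem_eig_tau hβ0 hβ1 hr hs)
  have hprim : eigSp F₀ A₀ (Jtau β r p) 1 = Submodule.span F₀ {Jtau β r p} := by
    ext z
    rw [Submodule.mem_span_singleton]
    constructor
    · intro h
      have h2 := Jmem_eig_tau' hβ0 hβ1 hr h
      rw [hp.1.2, Submodule.mem_span_singleton] at h2
      obtain ⟨c, hc⟩ := h2
      refine ⟨c, ?_⟩
      have h5 := congrArg (Jtau β r) hc
      rwa [Jtau_tau hβ0 hβ1 hr, Jtau_smul hβ0 hβ1 hr] at h5
    · rintro ⟨c, rfl⟩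
      rw [mem_eigSp', mul_smul_comm, hidem, one_smul]
  have hne : Jtau β r p ≠ 0 := by
    intro h0
    apply hp.2
    have h5 := congrArg (Jtau β r) h0
    rwa [Jtau_tau hβ0 hβ1 hr, Jtau_zero hβ0 hβ1 hr] at h5
  exact ⟨⟨⟨hidem, hdecomp,
    Jfusion_tau1 hβ0 hβ1 hr hp.1.1.f11,
    Jfusion_tau1 hβ0 hβ1 hr hp.1.1.f1a,
    Jfusion_tau1 hβ0 hβ1 hr hp.1.1.f1b,
    Jfusion_tau2 hβ0 hβ1 hr hp.1.1.faa,
    Jfusion_tau1 hβ0 hβ1 hr hp.1.1.fab,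
    Jfusion_tau2 hβ0 hβ1 hr hp.1.1.fbb⟩, hprim⟩, hne⟩

/-! ### The `(⋆)` condition and transport of `Jlam` -/

theorem Jlam_comm {β : F₀} (hβ0 : β ≠ 0) (hβ1 : β ≠ 1) (hstar : StarCond F₀ A₀ 0 β)
    {p q : A₀} (hp : JAxP β p) (hq : JAxP β q) : Jlam β p q = Jlam β q p := by
  obtain ⟨hu, hs, h⟩ := Jdec_spec hp.1 q
  obtain ⟨aα, haα, aβ, haβ, h'⟩ := hstar p q hp.1 hq.1 (Jlam β p q) _ hu _ hs h
  exact ((Jdec_unique hβ0 hβ1 hq haα haβ h').1).symm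

theorem Jlam_tau {β : F₀} (hβ0 : β ≠ 0) (hβ1 : β ≠ 1) {r : A₀} (hr : JAxP β r)
    {p : A₀} (hp : JAxP β p) (z : A₀) :
    Jlam β (Jtau β r p) z = Jlam β p (Jtau β r z) := by
  obtain ⟨hu, hs, h⟩ := Jdec_spec hp.1 (Jtau β r z)
  have hz : z = Jlam β p (Jtau β r z) • Jtau β r p + Jtau β r (Jc0 β p (Jtau β r z)) +
      Jtau β r (Jcb β p (Jtau β r z)) := by
    have h4 := congrArg (Jtau β r) h
    rw [Jtau_tau hβ0 hβ1 hr] at h4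
    conv_lhs => rw [h4]
    rw [Jtau_add hβ0 hβ1 hr, Jtau_add hβ0 hβ1 hr, Jtau_smul hβ0 hβ1 hr]
  exact (Jdec_unique hβ0 hβ1 (JAxP_tau hβ0 hβ1 hr hp)
    (Jmem_eig_tau hβ0 hβ1 hr hu) (Jmem_eig_tau hβ0 hβ1 hr hs) hz).1

theorem Jlam_comb {β : F₀} (hβ0 : β ≠ 0) (hβ1 : β ≠ 1) {r : A₀} (hr : JAxP β r)
    (c1 c2 c3 : F₀) (z1 z2 z3 : A₀) :
    Jlam β r (c1 • z1 + c2 • z2 - c3 • z3) =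
      c1 * Jlam β r z1 + c2 * Jlam β r z2 - c3 * Jlam β r z3 := by
  rw [sub_eq_add_neg, ← neg_smul, (Jdec_add hβ0 hβ1 hr _ _).1, (Jdec_add hβ0 hβ1 hr _ _).1,
    (Jdec_smul hβ0 hβ1 hr _ _).1, (Jdec_smul hβ0 hβ1 hr _ _).1, (Jdec_smul hβ0 hβ1 hr _ _).1]
  ring

theorem Ja_mul_even {β : F₀} (hβ0 : β ≠ 0) (hβ1 : β ≠ 1) {r : A₀} (hr : JAxP β r) {z : A₀}
    (hz : z ∈ eigSp F₀ A₀ r 1 ⊔ eigSp F₀ A₀ r 0) : r * z = Jlam β r z • r := by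
  obtain ⟨z1, hz1, z0, hz0, rfl⟩ := Submodule.mem_sup.mp hz
  rw [hr.1.2, Submodule.mem_span_singleton] at hz1
  obtain ⟨c, rfl⟩ := hz1
  have h1 := (Jdec_unique hβ0 hβ1 hr hz0 (zero_mem _)
    (show c • r + z0 = c • r + z0 + 0 by rw [add_zero])).1
  rw [mem_eigSp', zero_smul] at hz0
  rw [mul_add, mul_smul_comm, hr.1.1.idem, hz0, add_zero, h1]

/-! ### The key vanishing lemma -/

theorem Jtheta {β : F₀} (hβ0 : β ≠ 0) (hβ1 : β ≠ 1) (h2 : (2 : F₀) ≠ 0)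
    (hstar : StarCond F₀ A₀ 0 β) {a p q : A₀} (ha : JAxP β a) (hp : JAxP β p)
    (hq : JAxP β q) : Jlam β a (Jc0 β a p * Jc0 β a q) = 0 := by
  have hp' : JAxP β (Jtau β a p) := JAxP_tau hβ0 hβ1 ha hp
  have hqp : JAxP β (Jtau β q p) := JAxP_tau hβ0 hβ1 hq hp
  have hqp' : JAxP β (Jtau β q (Jtau β a p)) := JAxP_tau hβ0 hβ1 hq hp'
  obtain ⟨hP0, hPb, hpdec⟩ := Jdec_spec ha.1 p
  obtain ⟨hQ0, hQb, hqdec⟩ := Jdec_spec ha.1 q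
  have hPsum : p + Jtau β a p = (2 * Jlam β a p) • a + (2 : F₀) • Jc0 β a p := by
    rw [Jtau]
    nth_rewrite 1 2 [hpdec]
    simp only [mul_smul, two_smul]
    abel
  have hxqa : Jlam β q a = Jlam β a q := Jlam_comm hβ0 hβ1 hstar hq ha
  have hxpa : Jlam β p a = Jlam β a p := Jlam_comm hβ0 hβ1 hstar hp ha
  have hy' : Jlam β q (Jtau β a p) = Jlam β p (Jtau β a q) := by
    rw [Jlam_comm hβ0 hβ1 hstar hq hp', Jlam_tau hβ0 hβ1 ha hp]
  have hs1 : 2 * Jlam β q (Jc0 β a p) =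
      Jlam β p q + Jlam β p (Jtau β a q) - 2 * (Jlam β a p * Jlam β a q) := by
    have h4 := congrArg (Jlam β q) hPsum
    rw [(Jdec_add hβ0 hβ1 hq _ _).1, (Jdec_add hβ0 hβ1 hq _ _).1,
      (Jdec_smul hβ0 hβ1 hq _ _).1, (Jdec_smul hβ0 hβ1 hq _ _).1] at h4
    rw [hy', hxqa, Jlam_comm hβ0 hβ1 hstar hq hp] at h4
    linear_combination -h4
  have hD : β • Jcb β q a = Jlam β a q • a + β • Jcb β a q - Jlam β a q • q := by
    have h4 : a * q = Jlam β a q • a + β • Jcb β a q := Jmul_dec ha.1 q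
    have h5 : q * a = Jlam β a q • q + β • Jcb β q a := by
      rw [Jmul_dec hq.1 a, hxqa]
    have h6 : Jlam β a q • a + β • Jcb β a q = Jlam β a q • q + β • Jcb β q a := by
      rw [← h4, ← h5, mul_comm]
    rw [h6]; abel
  have hlpD : Jlam β p (Jlam β a q • a + β • Jcb β a q - Jlam β a q • q)
      = Jlam β a q * Jlam β a p + β * Jlam β p (Jcb β a q) - Jlam β a q * Jlam β p q := by
    rw [Jlam_comb hβ0 hβ1 hp, hxpa]
  have htauD : Jtau β a (Jlam β a q • a + β • Jcb β a q - Jlam β a q • q)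
      = Jlam β a q • a + β • (-Jcb β a q) - Jlam β a q • Jtau β a q := by
    rw [Jtau_sub hβ0 hβ1 ha, Jtau_add hβ0 hβ1 ha, Jtau_smul hβ0 hβ1 ha,
      Jtau_smul hβ0 hβ1 ha, Jtau_smul hβ0 hβ1 ha, Jtau_self hβ0 hβ1 ha,
      Jtau_of_Eb hβ0 hβ1 ha hQb]
  have hlp'D : Jlam β (Jtau β a p) (Jlam β a q • a + β • Jcb β a q - Jlam β a q • q)
      = Jlam β a q * Jlam β a p - β * Jlam β p (Jcb β a q)
        - Jlam β a q * Jlam β p (Jtau β a q) := by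
    rw [Jlam_tau hβ0 hβ1 ha hp, htauD, Jlam_comb hβ0 hβ1 hp, (Jdec_neg hβ0 hβ1 hp _).1, hxpa]
    ring
  have hlaD : Jlam β a (Jlam β a q • a + β • Jcb β a q - Jlam β a q • q)
      = Jlam β a q - Jlam β a q * Jlam β a q := by
    rw [Jlam_comb hβ0 hβ1 ha, (Jdec_self hβ0 hβ1 ha).1, (Jdec_of_Eb hβ0 hβ1 ha hQb).1]
    ring
  have htqa : β • Jtau β q a =
      β • a - (2 : F₀) • (Jlam β a q • a + β • Jcb β a q - Jlam β a q • q) := by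
    rw [Jtau, smul_sub, smul_comm β (2 : F₀), hD]
  have K : ∀ r' : A₀, JAxP β r' → β * Jlam β r' (Jtau β q a) = β * Jlam β r' a -
      2 * Jlam β r' (Jlam β a q • a + β • Jcb β a q - Jlam β a q • q) := by
    intro r' hr'
    have h4 := congrArg (Jlam β r') htqa
    rw [(Jdec_smul hβ0 hβ1 hr' _ _).1] at h4
    rw [sub_eq_add_neg, ← neg_smul, (Jdec_add hβ0 hβ1 hr' _ _).1,
      (Jdec_smul hβ0 hβ1 hr' _ _).1, (Jdec_smul hβ0 hβ1 hr' _ _).1] at h4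
    linear_combination h4
  have hK1 : β * Jlam β a (Jtau β q p) = β * Jlam β a p -
      2 * Jlam β p (Jlam β a q • a + β • Jcb β a q - Jlam β a q • q) := by
    have h4 : Jlam β a (Jtau β q p) = Jlam β p (Jtau β q a) := by
      rw [Jlam_comm hβ0 hβ1 hstar ha hqp, Jlam_tau hβ0 hβ1 hq hp]
    rw [h4, K p hp, hxpa]
  have hK2 : β * Jlam β a (Jtau β q (Jtau β a p)) = β * Jlam β a p -
      2 * Jlam β (Jtau β a p) (Jlam β a q • a + β • Jcb β a q - Jlam β a q • q) := by
    have h4 : Jlam β a (Jtau β q (Jtau β a p)) = Jlam β (Jtau β a p) (Jtau β q a) := by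
      rw [Jlam_comm hβ0 hβ1 hstar ha hqp', Jlam_tau hβ0 hβ1 hq hp']
    have h5 : Jlam β (Jtau β a p) a = Jlam β a p := by
      rw [Jlam_tau hβ0 hβ1 ha hp, Jtau_self hβ0 hβ1 ha, hxpa]
    rw [h4, K _ hp', h5]
  have hK3 : β * Jlam β a (Jtau β q a) = β -
      2 * (Jlam β a q - Jlam β a q * Jlam β a q) := by
    rw [K a ha, (Jdec_self hβ0 hβ1 ha).1, hlaD]
    ring
  have step1 : β * Jlam β a (Jtau β q p) + β * Jlam β a (Jtau β q (Jtau β a p)) =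
      2 * β * Jlam β a p - 4 * (Jlam β a q * Jlam β a p)
        + 2 * (Jlam β a q * Jlam β p q) + 2 * (Jlam β a q * Jlam β p (Jtau β a q)) := by
    linear_combination hK1 + hK2 - 2 * hlpD - 2 * hlp'D
  have hPsum2 : Jtau β q p + Jtau β q (Jtau β a p) =
      (2 * Jlam β a p) • Jtau β q a + (2 : F₀) • Jtau β q (Jc0 β a p) := by
    have h4 := congrArg (Jtau β q) hPsum
    rwa [Jtau_add hβ0 hβ1 hq, Jtau_add hβ0 hβ1 hq, Jtau_smul hβ0 hβ1 hq,
      Jtau_smul hβ0 hβ1 hq] at h4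
  have hE6 : Jlam β a (Jtau β q p) + Jlam β a (Jtau β q (Jtau β a p)) =
      (2 * Jlam β a p) * Jlam β a (Jtau β q a) + 2 * Jlam β a (Jtau β q (Jc0 β a p)) := by
    have h4 := congrArg (Jlam β a) hPsum2
    rwa [(Jdec_add hβ0 hβ1 ha _ _).1, (Jdec_add hβ0 hβ1 ha _ _).1,
      (Jdec_smul hβ0 hβ1 ha _ _).1, (Jdec_smul hβ0 hβ1 ha _ _).1] at h4
  have step2' : (2 : F₀) * (β * Jlam β a (Jtau β q (Jc0 β a p))) =
      (2 : F₀) * (2 * (Jlam β a q * Jlam β q (Jc0 β a p))) := by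
    linear_combination (-β) * hE6 + step1 - (2 * Jlam β a p) * hK3 + (-2 * Jlam β a q) * hs1
  have step2 := mul_left_cancel₀ h2 step2'
  have hT : (2 : F₀) • Jcb β q (Jc0 β a p) = Jc0 β a p - Jtau β q (Jc0 β a p) := by
    rw [Jtau]; abel
  have hT2 : 2 * Jlam β a (Jcb β q (Jc0 β a p)) = - Jlam β a (Jtau β q (Jc0 β a p)) := by
    have h4 := congrArg (Jlam β a) hT
    rw [(Jdec_smul hβ0 hβ1 ha _ _).1, sub_eq_add_neg, (Jdec_add hβ0 hβ1 ha _ _).1,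
      (Jdec_neg hβ0 hβ1 ha _).1, (Jdec_of_E0 hβ0 hβ1 ha hP0).1] at h4
    linear_combination h4
  have hTa : β * Jlam β a (Jcb β q (Jc0 β a p)) =
      -(Jlam β a q * Jlam β q (Jc0 β a p)) :=
    mul_left_cancel₀ h2 (by linear_combination β * hT2 - step2)
  have hmul : q * Jc0 β a p = Jlam β q (Jc0 β a p) • q + β • Jcb β q (Jc0 β a p) :=
    Jmul_dec hq.1 (Jc0 β a p)
  have hfin1 : Jlam β a (q * Jc0 β a p) = 0 := by
    rw [hmul, (Jdec_add hβ0 hβ1 ha _ _).1, (Jdec_smul hβ0 hβ1 ha _ _).1,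
      (Jdec_smul hβ0 hβ1 ha _ _).1]
    linear_combination hTa
  have haP0 : a * Jc0 β a p = 0 := by
    have h4 := hP0; rw [mem_eigSp', zero_smul] at h4; exact h4
  have hQbP0 : Jcb β a q * Jc0 β a p ∈ eigSp F₀ A₀ a β := by
    rw [mul_comm]; exact ha.1.1.fab _ hP0 _ hQb
  have hsplit : q * Jc0 β a p = Jlam β a q • (a * Jc0 β a p) + Jc0 β a q * Jc0 β a p
      + Jcb β a q * Jc0 β a p := by
    nth_rewrite 1 [hqdec]
    rw [add_mul, add_mul, smul_mul_assoc]
  have hfin2 : Jlam β a (Jc0 β a q * Jc0 β a p) = 0 := by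
    have h4 := hfin1
    rw [hsplit, haP0, smul_zero, (Jdec_add hβ0 hβ1 ha _ _).1, (Jdec_add hβ0 hβ1 ha _ _).1,
      (Jdec_zero hβ0 hβ1 ha).1, (Jdec_of_Eb hβ0 hβ1 ha hQbP0).1] at h4
    linear_combination h4
  rw [mul_comm]
  exact hfin2

end JAux

theorem seress_identity_iff (α β : F) (h2 : (2 : F) ≠ 0)
    (hα1 : α ≠ 1) (hβ1 : β ≠ 1) (hαβ : α ≠ β)
    (hA : IsJAxialAlg F A α β) (hstar : StarCond F A α β)
    (a : A) (ha : IsPrimJAxis F A α β a) (hα_ne : eigSp F A a α ≠ ⊥) :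
    (∀ x : A, ∀ y ∈ eigSp F A a 1 ⊔ eigSp F A a α, a * (x * y) = (a * x) * y) ↔
      α = 0 := by
  constructor
  · intro hS
    obtain ⟨u, hu, hune⟩ := (Submodule.ne_bot_iff _).mp hα_ne
    have hu' : a * u = α • u := hu
    have h1 := hS a u (Submodule.mem_sup_right hu)
    rw [ha.1.idem, hu', mul_smul_comm, hu', smul_smul] at h1
    have h3 : (α * α - α) • u = 0 := by rw [sub_smul, h1, sub_self]
    have h4 : α * α - α = 0 := by
      by_contra hne
      exact hune (jsmul_eq_zero hne h3)
    have h5 : α * (α - 1) = 0 := by linear_combination h4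
    rcases mul_eq_zero.mp h5 with h | h
    · exact h
    · exact absurd (sub_eq_zero.mp h) hα1
  · intro h0
    subst h0
    by_cases ha0 : a = 0
    · intro x y hy
      rw [ha0, zero_mul, zero_mul, zero_mul]
    · have hβ0 : β ≠ 0 := fun h => hαβ h.symm
      have hAx : JAxP β a := ⟨ha, ha0⟩
      obtain ⟨S, hS, hSgen⟩ := hA
      have hmulgen : ∀ p ∈ {w : A | JAxP β w}, ∀ q ∈ {w : A | JAxP β w},
          p * q ∈ Submodule.span F {w : A | JAxP β w} := by
        intro p hp q hq
        have h1 : q * p = Jlam β q p • q + β • Jcb β q p := Jmul_dec hq.1 p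
        have h3 : p - Jtau β q p = (2 : F) • Jcb β q p := by rw [Jtau]; abel
        have h2' : Jcb β q p = (2 : F)⁻¹ • (p - Jtau β q p) := by
          rw [h3, smul_smul, inv_mul_cancel₀ h2, one_smul]
        rw [mul_comm, h1, h2']
        exact add_mem (Submodule.smul_mem _ _ (Submodule.subset_span hq))
          (Submodule.smul_mem _ _ (Submodule.smul_mem _ _
            (sub_mem (Submodule.subset_span hp)
              (Submodule.subset_span (JAxP_tau hβ0 hβ1 hq hp)))))
      have hmulcl : ∀ u v : A, u ∈ Submodule.span F {w : A | JAxP β w} →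
          v ∈ Submodule.span F {w : A | JAxP β w} →
          u * v ∈ Submodule.span F {w : A | JAxP β w} := by
        have hstep : ∀ p ∈ {w : A | JAxP β w}, ∀ v ∈ Submodule.span F {w : A | JAxP β w},
            p * v ∈ Submodule.span F {w : A | JAxP β w} := by
          intro p hp v hv
          induction hv using Submodule.span_induction with
          | mem x hx => exact hmulgen p hp x hx
          | zero => rw [mul_zero]; exact zero_mem _
          | add x y hx1 hy1 hx hy => rw [mul_add]; exact add_mem hx hy
          | smul t x hx1 hx => rw [mul_smul_comm]; exact Submodule.smul_mem _ _ hx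
        intro u v hu hv
        induction hu using Submodule.span_induction with
        | mem x hx => exact hstep x hx v hv
        | zero => rw [zero_mul]; exact zero_mem _
        | add x y hx1 hy1 hx hy => rw [add_mul]; exact add_mem hx hy
        | smul t x hx1 hx => rw [smul_mul_assoc]; exact Submodule.smul_mem _ _ hx
      have hspan : ∀ z : A, z ∈ Submodule.span F {w : A | JAxP β w} := by
        intro z
        have hz : z ∈ NonUnitalAlgebra.adjoin F S := by rw [hSgen]; trivial
        induction hz using NonUnitalAlgebra.adjoin_induction with
        | mem x hx =>
          by_cases hx0 : x = 0
          · rw [hx0]; exact zero_mem _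
          · exact Submodule.subset_span ⟨hS x hx, hx0⟩
        | add x y hx1 hy1 hx hy => exact add_mem hx hy
        | zero => exact zero_mem _
        | mul x y hx1 hy1 hx hy => exact hmulcl x y hx hy
        | smul t x hx1 hx => exact Submodule.smul_mem _ _ hx
      have hproj : ∀ z, z ∈ Submodule.span F {w : A | JAxP β w} →
          Jc0 β a z ∈ Submodule.span F (Jc0 β a '' {w : A | JAxP β w}) := by
        intro z hz
        induction hz using Submodule.span_induction with
        | mem x hx => exact Submodule.subset_span ⟨x, hx, rfl⟩
        | zero => rw [(Jdec_zero hβ0 hβ1 hAx).2.1]; exact zero_mem _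
        | add x y hx1 hy1 hx hy =>
          rw [(Jdec_add hβ0 hβ1 hAx x y).2.1]; exact add_mem hx hy
        | smul t x hx1 hx =>
          rw [(Jdec_smul hβ0 hβ1 hAx t x).2.1]; exact Submodule.smul_mem _ _ hx
      have hW : ∀ u, u ∈ eigSp F A a 0 →
          u ∈ Submodule.span F (Jc0 β a '' {w : A | JAxP β w}) := by
        intro u hu
        have h1 := hproj u (hspan u)
        rwa [(Jdec_of_E0 hβ0 hβ1 hAx hu).2.1] at h1
      have hbase : ∀ p, JAxP β p → ∀ q, JAxP β q →
          a * (Jc0 β a p * Jc0 β a q) = 0 := by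
        intro p hp q hq
        have hm : Jc0 β a p * Jc0 β a q ∈ eigSp F A a 1 ⊔ eigSp F A a 0 :=
          hAx.1.1.faa _ (Jdec_spec hAx.1 p).1 _ (Jdec_spec hAx.1 q).1
        rw [Ja_mul_even hβ0 hβ1 hAx hm, Jtheta hβ0 hβ1 h2 hstar hAx hp hq, zero_smul]
      have hstepA : ∀ p, JAxP β p →
          ∀ v ∈ Submodule.span F (Jc0 β a '' {w : A | JAxP β w}),
          a * (Jc0 β a p * v) = 0 := by
        intro p hp v hv
        induction hv using Submodule.span_induction with
        | mem x hx =>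
          obtain ⟨q, hq, rfl⟩ := hx
          exact hbase p hp q hq
        | zero => rw [mul_zero, mul_zero]
        | add x y hx1 hy1 hx hy => rw [mul_add, mul_add, hx, hy, add_zero]
        | smul t x hx1 hx => rw [mul_smul_comm, mul_smul_comm, hx, smul_zero]
      have hkey : ∀ u ∈ Submodule.span F (Jc0 β a '' {w : A | JAxP β w}),
          ∀ v ∈ Submodule.span F (Jc0 β a '' {w : A | JAxP β w}),
          a * (u * v) = 0 := by
        intro u hu v hv
        induction hu using Submodule.span_induction with
        | mem x hx =>
          obtain ⟨p, hp, rfl⟩ := hx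
          exact hstepA p hp v hv
        | zero => rw [zero_mul, mul_zero]
        | add x y hx1 hy1 hx hy => rw [add_mul, mul_add, hx, hy, add_zero]
        | smul t x hx1 hx => rw [smul_mul_assoc, mul_smul_comm, hx, smul_zero]
      intro x y hy
      obtain ⟨y1, hy1, u', hu', rfl⟩ := Submodule.mem_sup.mp hy
      rw [ha.2, Submodule.mem_span_singleton] at hy1
      obtain ⟨d, rfl⟩ := hy1
      obtain ⟨hu, hs, hxdec⟩ := Jdec_spec hAx.1 x
      have hau : a * Jc0 β a x = 0 := by
        have h4 := hu; rwa [mem_eigSp', zero_smul] at h4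
      have hua : Jc0 β a x * a = 0 := by rw [mul_comm]; exact hau
      have has : a * Jcb β a x = β • Jcb β a x := hs
      have hsa : Jcb β a x * a = β • Jcb β a x := by rw [mul_comm]; exact has
      have hau' : a * u' = 0 := by
        have h4 := hu'; rwa [mem_eigSp', zero_smul] at h4
      have haa : a * a = a := hAx.1.1.idem
      have huu' : a * (Jc0 β a x * u') = 0 := hkey _ (hW _ hu) _ (hW _ hu')
      have hsu' : a * (Jcb β a x * u') = β • (Jcb β a x * u') := by
        have hm : Jcb β a x * u' ∈ eigSp F A a β := by
          rw [mul_comm]; exact hAx.1.1.fab _ hu' _ hs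
        exact hm
      have hax : a * x = Jlam β a x • a + β • Jcb β a x := Jmul_dec hAx.1 x
      rw [hax]
      nth_rewrite 1 [hxdec]
      simp only [mul_add, add_mul, smul_mul_assoc, mul_smul_comm, haa, hau, hua, hsa, hau',
        huu', hsu', smul_zero, mul_zero, zero_add, add_zero, smul_add, smul_smul]
      rw [has]
      module
end
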